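/- arXiv:2602.17178 — 6 statements merged into one kernel-verified Lean document; each statement's English description precedes it below -/
import Mathlib

section
/- Fix t > 0. There exist constants C̃(t) > 0, κ̃(t) > 0 and r₀(t) > ρ such that the function G(r) := f(r)² e^{K̃ t g(r)} is strictly decreasing on [r₀(t),∞) with lim_{r→∞} G(r) = 0, and such that for every u ≥ u₀(t) := κ̃(t)/G(r₀(t)) and every β ≥ r₀(t) satisfying G(β) = κ̃(t)/u, one has sup{ μ({x ∈ ℝ^d : Q_t h(x) > u}) : h measurable, h ≥ 0, ∫_{ℝ^d} h dμ = 1 } ≥ (1/u) · C̃(t) / (g(β)² e^{K̃ t g(β)}). -/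
/-!
With `c = K̃ t` and `a = g / |log f|`, `log (f² e^{c g}) = -(2 - c a) |log f|`. Condition (D)
makes `c a ≤ 1` and nonincreasing beyond some radius, where `|log f|` increases strictly to `∞`;
hence `G = f² e^{c g}` decreases strictly and `G ≤ f → 0`.

For the lower bound let `e` be a unit vector and test `Q_t` on the normalised indicator of
`B = B((β + 1/2) e, 1/2)`. For `x, y ∈ B`, keep in the lower estimate only the integral over
`B' = B((β - 1/2) e, 1/2)`: there `|x - z|, |z - y| < 2` and `|z| < β ≤ |x|, |y|`, so
`q_t(x, y) ≥ c₁ e^{λ₀ t} f₁(2)² |B'| e^{-c g(β)} / f(β)² = 2 κ̃ / G(β) = 2 u` for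
`κ̃ := c₁ e^{λ₀ t} f₁(2)² |B'| / 2`, hence `Q_t h > u` on `B`. Finally
`μ(B) ≳ (f(β) / g(β))²`, because `|x| ∈ (β, β + 1)` on `B`, by the comparison conditions and the
lower bound on `φ₀`.
-/

open MeasureTheory Filter Topology Set Metric
open scoped ENNReal

section Profile

variable {f g : ℝ → ℝ} {c R : ℝ}

lemma sq_mul_exp_eq_exp {r : ℝ} (h0 : 0 < f r) (h1 : f r < 1) :
    f r ^ 2 * Real.exp (c * g r) =
      Real.exp (-((2 - c * (g r / |Real.log (f r)|)) * |Real.log (f r)|)) := by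
  have hlog : Real.log (f r) < 0 := Real.log_neg h0 h1
  have hexp : -((2 - c * (g r / |Real.log (f r)|)) * |Real.log (f r)|) =
      Real.log (f r ^ 2) + c * g r := by
    have := hlog.ne
    rw [abs_of_neg hlog, Real.log_pow]
    field_simp
    ring
  rw [hexp, Real.exp_add, Real.exp_log (by positivity)]

lemma exists_ge_of_conditionD (c R' : ℝ)
    (hD : ∃ R > 0, (∀ r ≥ R, f r < 1) ∧
      AntitoneOn (fun r => g r / |Real.log (f r)|) (Ici R) ∧
      Tendsto (fun r => g r / |Real.log (f r)|) atTop (𝓝 0)) :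
    ∃ R ≥ R', 0 < R ∧ (∀ r ≥ R, f r < 1) ∧
      AntitoneOn (fun r => g r / |Real.log (f r)|) (Ici R) ∧
      ∀ r ≥ R, c * (g r / |Real.log (f r)|) ≤ 1 := by
  obtain ⟨R, hR, hf1, ha_anti, ha_lim⟩ := hD
  obtain ⟨R₁, hR₁⟩ := eventually_atTop.1
    ((ha_lim.const_mul c).eventually (eventually_le_nhds (by simp : c * 0 < 1)))
  have hR_le : R ≤ max (max R R₁) R' := le_max_of_le_left (le_max_left _ _)
  have hR₁_le : R₁ ≤ max (max R R₁) R' := le_max_of_le_left (le_max_right _ _)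
  exact ⟨_, le_max_right _ _, hR.trans_le hR_le, fun r hr => hf1 r (hR_le.trans hr),
    ha_anti.mono (Ici_subset_Ici.2 hR_le), fun r hr => hR₁ r (hR₁_le.trans hr)⟩

lemma strictAntiOn_sq_mul_exp (hc : 0 ≤ c) (hR : 0 < R) (hf_pos : ∀ r > 0, 0 < f r)
    (hf_anti : StrictAntiOn f (Ioi 0)) (hf1 : ∀ r ≥ R, f r < 1)
    (ha_anti : AntitoneOn (fun r => g r / |Real.log (f r)|) (Ici R))
    (ha_le : ∀ r ≥ R, c * (g r / |Real.log (f r)|) ≤ 1) :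
    StrictAntiOn (fun r => f r ^ 2 * Real.exp (c * g r)) (Ici R) := by
  intro r hr s hs hrs
  have hr0 : 0 < r := hR.trans_le hr
  have hs0 : 0 < s := hR.trans_le hs
  have hlog : |Real.log (f r)| < |Real.log (f s)| := by
    rw [abs_of_neg (Real.log_neg (hf_pos r hr0) (hf1 r hr)),
      abs_of_neg (Real.log_neg (hf_pos s hs0) (hf1 s hs))]
    exact neg_lt_neg (Real.log_lt_log (hf_pos s hs0) (hf_anti hr0 hs0 hrs))
  have ha : c * (g s / |Real.log (f s)|) ≤ c * (g r / |Real.log (f r)|) :=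
    mul_le_mul_of_nonneg_left (ha_anti hr hs hrs.le) hc
  dsimp only
  rw [sq_mul_exp_eq_exp (hf_pos r hr0) (hf1 r hr), sq_mul_exp_eq_exp (hf_pos s hs0) (hf1 s hs),
    Real.exp_lt_exp, neg_lt_neg_iff]
  exact mul_lt_mul' (by linarith) hlog (abs_nonneg _) (by linarith [ha_le s hs])

lemma tendsto_sq_mul_exp_zero (hf_pos : ∀ r > 0, 0 < f r) (hf_lim : Tendsto f atTop (𝓝 0))
    (hR : 0 < R) (hf1 : ∀ r ≥ R, f r < 1) (ha_le : ∀ r ≥ R, c * (g r / |Real.log (f r)|) ≤ 1) :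
    Tendsto (fun r => f r ^ 2 * Real.exp (c * g r)) atTop (𝓝 0) := by
  refine tendsto_of_tendsto_of_tendsto_of_le_of_le' tendsto_const_nhds hf_lim
    (.of_forall fun r => by positivity) ?_
  filter_upwards [eventually_ge_atTop R] with r hr
  have hfr := hf_pos r (hR.trans_le hr)
  have hlog := Real.log_neg hfr (hf1 r hr)
  rw [sq_mul_exp_eq_exp hfr (hf1 r hr)]
  calc Real.exp (-((2 - c * (g r / |Real.log (f r)|)) * |Real.log (f r)|))
      ≤ Real.exp (Real.log (f r)) := by
        rw [Real.exp_le_exp]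
        nlinarith [abs_of_neg hlog,
          mul_nonneg (sub_nonneg.2 (ha_le r hr)) (abs_nonneg (Real.log (f r)))]
    _ = f r := Real.exp_log hfr

lemma properties_of_eq_min_one {f₁ : ℝ → ℝ} (hf₁ : ∀ r, f₁ r = min (f r) 1)
    (hf_pos : ∀ r > 0, 0 < f r) (hf_anti : AntitoneOn f (Ioi 0))
    (hf_cont : ContinuousOn f (Ioi 0)) :
    ContinuousOn f₁ (Ioi 0) ∧ AntitoneOn f₁ (Ioi 0) ∧ (∀ r > 0, 0 < f₁ r) ∧ ∀ r, f₁ r ≤ 1 := by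
  obtain rfl : f₁ = fun r => min (f r) 1 := funext hf₁
  exact ⟨hf_cont.inf continuousOn_const,
    fun r hr s hs hrs => min_le_min_right 1 (hf_anti hr hs hrs),
    fun r hr => lt_min (hf_pos r hr) one_pos, fun r => min_le_right _ _⟩

lemma le_min_div_of_comparison {C₆ C₇ β r : ℝ} (hf_pos : ∀ r > 0, 0 < f r)
    (hf_anti : AntitoneOn f (Ioi 0)) (hg_mono : MonotoneOn g (Ici 0)) (hg_pos : 0 < g r)
    (hC₇ : 1 ≤ C₇) (hf_comp : f β ≤ C₇ * f (β + 1)) (hg_comp : g (β + 1) ≤ C₆ * g β)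
    (hfβ : f β ≤ 1) (hβ : 0 < β) (hr : r ∈ Icc β (β + 1)) :
    f β / (C₇ * C₆ * g β) ≤ min (f r) 1 / g r := by
  have hr0 : 0 < r := hβ.trans_le hr.1
  have hf : f β / C₇ ≤ f r :=
    calc f β / C₇ ≤ f (β + 1) := by rw [div_le_iff₀ (by linarith)]; linarith
      _ ≤ f r := hf_anti hr0 (mem_Ioi.2 (by linarith)) hr.2
  have hg : g r ≤ C₆ * g β :=
    (hg_mono (mem_Ici.2 hr0.le) (mem_Ici.2 (by linarith)) hr.2).trans hg_comp
  rw [mul_assoc, ← div_div]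
  exact div_le_div₀ (le_min (hf_pos r hr0).le zero_le_one)
    (le_min hf ((div_le_self (by linarith [hf_pos β hβ]) hC₇).trans hfβ)) hg_pos hg

end Profile

section Balls

variable {E : Type*} [NormedAddCommGroup E] [NormedSpace ℝ E] {e x y z : E} {a r β : ℝ}
  {f₁ g : ℝ → ℝ} {c : ℝ}

lemma norm_mem_Ioo_of_mem_ball_smul (he : ‖e‖ = 1) (ha : 0 ≤ a) (hx : x ∈ ball (a • e) r) :
    a - r < ‖x‖ ∧ ‖x‖ < a + r := by
  have h := (abs_norm_sub_norm_le x (a • e)).trans_lt (mem_ball_iff_norm.1 hx)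
  rw [norm_smul, he, mul_one, Real.norm_of_nonneg ha, abs_lt] at h
  constructor <;> linarith [h.1, h.2]

lemma norm_sub_lt_two_of_mem_ball_smul (he : ‖e‖ = 1) (hx : x ∈ ball ((β + 2⁻¹) • e) 2⁻¹)
    (hz : z ∈ ball ((β - 2⁻¹) • e) 2⁻¹) : ‖x - z‖ < 2 := by
  have hc : dist ((β + 2⁻¹) • e) ((β - 2⁻¹) • e) = 1 := by
    rw [dist_eq_norm, ← sub_smul]
    norm_num [he]
  rw [← dist_eq_norm]
  linarith [dist_triangle4 x ((β + 2⁻¹) • e) ((β - 2⁻¹) • e) z, mem_ball.1 hx, mem_ball'.1 hz]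

lemma le_lowerEstimate_integrand (hf₁anti : AntitoneOn f₁ (Ioi 0))
    (hf₁pos : ∀ r > 0, 0 < f₁ r) (hg_mono : MonotoneOn g (Ici 0)) (hc : 0 ≤ c)
    (hβ : 2⁻¹ ≤ β) (he : ‖e‖ = 1) (hx : x ∈ ball ((β + 2⁻¹) • e) 2⁻¹)
    (hy : y ∈ ball ((β + 2⁻¹) • e) 2⁻¹) (hz : z ∈ ball ((β - 2⁻¹) • e) 2⁻¹) :
    f₁ 2 ^ 2 * Real.exp (-(c * g β)) ≤ f₁ ‖x - z‖ * f₁ ‖z - y‖ * Real.exp (-(c * g ‖z‖)) := by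
  have hxn := norm_mem_Ioo_of_mem_ball_smul he (by linarith) hx
  have hyn := norm_mem_Ioo_of_mem_ball_smul he (by linarith) hy
  have hzn := norm_mem_Ioo_of_mem_ball_smul he (by linarith) hz
  have hxz : 0 < ‖x - z‖ := by linarith [norm_sub_norm_le x z]
  have hzy : 0 < ‖z - y‖ := by linarith [norm_sub_norm_le y z, norm_sub_rev z y]
  have h0 := (hf₁pos 2 two_pos).le
  have h1 : f₁ 2 ≤ f₁ ‖x - z‖ :=
    hf₁anti hxz (by norm_num) (norm_sub_lt_two_of_mem_ball_smul he hx hz).le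
  have h2 : f₁ 2 ≤ f₁ ‖z - y‖ :=
    hf₁anti hzy (by norm_num) (norm_sub_rev z y ▸ norm_sub_lt_two_of_mem_ball_smul he hy hz).le
  have h3 : Real.exp (-(c * g β)) ≤ Real.exp (-(c * g ‖z‖)) :=
    Real.exp_le_exp.2 (neg_le_neg (mul_le_mul_of_nonneg_left
      (hg_mono (norm_nonneg z) (mem_Ici.2 (by linarith)) (by linarith)) hc))
  rw [sq]
  exact mul_le_mul (mul_le_mul h1 h2 h0 (h0.trans h1)) h3 (Real.exp_pos _).le
    (mul_nonneg (h0.trans h1) (h0.trans h2))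

end Balls

section Integrals

variable {α : Type*} [MeasurableSpace α] {μ : Measure α}

lemma mul_measure_le_withDensity_apply {ρ : α → ℝ≥0∞} {s : Set α} (hs : MeasurableSet s)
    {c : ℝ≥0∞} (h : ∀ x ∈ s, c ≤ ρ x) : c * μ s ≤ μ.withDensity ρ s := by
  rw [withDensity_apply _ hs, ← setLIntegral_const]
  exact setLIntegral_mono' hs h

lemma mul_measureReal_le_setIntegral {F : α → ℝ} {S B : Set α} {δ : ℝ} (hF : IntegrableOn F S μ)
    (hF0 : 0 ≤ᵐ[μ.restrict S] F) (hB : MeasurableSet B) (hB_fin : μ B ≠ ∞) (hBS : B ⊆ S)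
    (hδ : ∀ z ∈ B, δ ≤ F z) : δ * μ.real B ≤ ∫ z in S, F z ∂μ :=
  (setIntegral_ge_of_const_le_real hB hB_fin hδ (hF.mono_set hBS)).trans
    (setIntegral_mono_set hF hF0 hBS.eventuallyLE)

lemma measure_le_iSup_measure_lt_integral [IsFiniteMeasure μ] {k : α → α → ℝ}
    (hk : ∀ x, Integrable (k x) μ) {B : Set α} (hB : MeasurableSet B) {u v : ℝ} (huv : u < v)
    (hkB : ∀ x ∈ B, ∀ y ∈ B, v ≤ k x y) :
    μ B ≤ ⨆ (h : α → ℝ) (_ : Measurable h ∧ (∀ y, 0 ≤ h y) ∧ Integrable h μ ∧ ∫ y, h y ∂μ = 1),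
      μ {x | u < ∫ y, k x y * h y ∂μ} := by
  rcases eq_or_ne (μ B) 0 with hB0 | hB0
  · simp [hB0]
  have hB_pos : 0 < μ.real B := ENNReal.toReal_pos hB0 (measure_ne_top μ B)
  refine le_iSup₂_of_le (B.indicator fun _ => (μ.real B)⁻¹)
    ⟨measurable_const.indicator hB, indicator_nonneg fun _ _ => inv_nonneg.2 hB_pos.le,
      (integrable_const _).indicator hB, ?_⟩ (measure_mono fun x hx => ?_)
  · rw [integral_indicator_const _ hB, smul_eq_mul, mul_inv_cancel₀ hB_pos.ne']
  · have hQ : ∫ y, k x y * B.indicator (fun _ => (μ.real B)⁻¹) y ∂μ =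
        (∫ y in B, k x y ∂μ) * (μ.real B)⁻¹ := by
      simp_rw [← indicator_mul_right, integral_indicator hB, integral_mul_const]
    have hv :=
      setIntegral_ge_of_const_le_real hB (measure_ne_top μ B) (hkB x hx) (hk x).integrableOn
    change u < _
    rw [hQ, lt_mul_inv_iff₀ hB_pos]
    exact (mul_lt_mul_of_pos_right huv hB_pos).trans_le hv

end Integrals

section Kernel

variable {E : Type*} [NormedAddCommGroup E] [MeasurableSpace E] [BorelSpace E]
  {ν : Measure E} {f f₁ g : ℝ → ℝ} {c : ℝ}

lemma aestronglyMeasurable_comp_norm_sub [NullSingletonClass ν] {φ : ℝ → ℝ}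
    (hφ : ContinuousOn φ (Ioi 0)) (x : E) : AEStronglyMeasurable (fun z => φ ‖x - z‖) ν := by
  have hcont : ContinuousOn (fun z => φ ‖x - z‖) {x}ᶜ :=
    hφ.comp (continuous_const.sub continuous_id).norm.continuousOn
      fun z hz => norm_pos_iff.2 (sub_ne_zero.2 (Ne.symm hz))
  have h := hcont.aestronglyMeasurable (μ := ν) isOpen_compl_singleton.measurableSet
  rwa [Measure.restrict_eq_self_of_ae_mem (s := {x}ᶜ) (ν.ae_ne x)] at h

lemma integrableOn_lowerEstimate_integrand [NullSingletonClass ν]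
    (hf₁c : ContinuousOn f₁ (Ioi 0)) (hf₁pos : ∀ r > 0, 0 < f₁ r) (hf₁le : ∀ r, f₁ r ≤ 1)
    (hgc : ContinuousOn g (Ici 0)) (hg : ∀ r ≥ 0, 0 < g r) (hc : 0 ≤ c) (x y : E) {S : Set E}
    (hS : ν S ≠ ∞) :
    IntegrableOn (fun z => f₁ ‖x - z‖ * f₁ ‖z - y‖ * Real.exp (-(c * g ‖z‖))) S ν ∧
      0 ≤ᵐ[ν.restrict S] fun z => f₁ ‖x - z‖ * f₁ ‖z - y‖ * Real.exp (-(c * g ‖z‖)) := by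
  have hbound : ∀ᵐ z ∂ν, 0 ≤ f₁ ‖x - z‖ * f₁ ‖z - y‖ * Real.exp (-(c * g ‖z‖)) ∧
      f₁ ‖x - z‖ * f₁ ‖z - y‖ * Real.exp (-(c * g ‖z‖)) ≤ 1 := by
    filter_upwards [ν.ae_ne x, ν.ae_ne y] with z hzx hzy
    have h1 := hf₁pos _ (norm_pos_iff.2 (sub_ne_zero.2 (Ne.symm hzx)))
    have h2 := hf₁pos _ (norm_pos_iff.2 (sub_ne_zero.2 hzy))
    have h3 : Real.exp (-(c * g ‖z‖)) ≤ 1 :=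
      Real.exp_le_one_iff.2 (neg_nonpos.2 (mul_nonneg hc (hg _ (norm_nonneg z)).le))
    exact ⟨by positivity, mul_le_one₀ (mul_le_one₀ (hf₁le _) h2.le (hf₁le _)) (by positivity) h3⟩
  have hexp : Continuous fun z : E => Real.exp (-(c * g ‖z‖)) :=
    Real.continuous_exp.comp
      (continuous_const.mul (hgc.comp_continuous continuous_norm fun z => norm_nonneg z)).neg
  have hmeas : AEStronglyMeasurable
      (fun z => f₁ ‖x - z‖ * f₁ ‖z - y‖ * Real.exp (-(c * g ‖z‖))) ν := by
    refine ((aestronglyMeasurable_comp_norm_sub hf₁c x).mul ?_).mul hexp.aestronglyMeasurable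
    simpa only [norm_sub_rev] using aestronglyMeasurable_comp_norm_sub hf₁c (ν := ν) y
  refine ⟨Measure.integrableOn_of_bounded (M := 1) hS hmeas ?_,
    ae_restrict_of_ae (hbound.mono fun z hz => hz.1)⟩
  exact ae_restrict_of_ae (hbound.mono fun z hz => by
    rw [Real.norm_eq_abs, abs_le]
    exact ⟨by linarith [hz.1], hz.2⟩)

lemma le_kernel_of_lowerEstimate [NormedSpace ℝ E] [FiniteDimensional ℝ E] [ν.IsAddHaarMeasure]
    (hf₁c : ContinuousOn f₁ (Ioi 0)) (hf₁anti : AntitoneOn f₁ (Ioi 0))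
    (hf₁pos : ∀ r > 0, 0 < f₁ r) (hf₁le : ∀ r, f₁ r ≤ 1) (hgc : ContinuousOn g (Ici 0))
    (hg_mono : MonotoneOn g (Ici 0)) (hg : ∀ r ≥ 0, 0 < g r) (hc : 0 ≤ c)
    {q : E → E → ℝ} {A ρ β : ℝ} (hA : 0 ≤ A) (hρβ : ρ ≤ β) (hβ : 2⁻¹ ≤ β) {e : E} (he : ‖e‖ = 1)
    (hq : ∀ x y : E, ρ < ‖x‖ → ρ < ‖y‖ →
      A * (f₁ ‖x‖ * f₁ ‖y‖)⁻¹ * (∫ z in {z : E | ρ - 1 < ‖z‖ ∧ ‖z‖ < max ‖x‖ ‖y‖},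
        f₁ ‖x - z‖ * f₁ ‖z - y‖ * Real.exp (-(c * g ‖z‖)) ∂ν) ≤ q x y)
    {x y : E} (hx : x ∈ ball ((β + 2⁻¹) • e) 2⁻¹) (hy : y ∈ ball ((β + 2⁻¹) • e) 2⁻¹) :
    A * f₁ 2 ^ 2 * ν.real (ball 0 2⁻¹) / (f₁ β ^ 2 * Real.exp (c * g β)) ≤ q x y := by
  have : Nontrivial E := nontrivial_of_ne e 0 (norm_ne_zero_iff.1 (by simp [he]))
  set B' := ball ((β - 2⁻¹) • e) 2⁻¹
  have hxn := norm_mem_Ioo_of_mem_ball_smul he (by linarith) hx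
  have hyn := norm_mem_Ioo_of_mem_ball_smul he (by linarith) hy
  have hB'S : B' ⊆ {z : E | ρ - 1 < ‖z‖ ∧ ‖z‖ < max ‖x‖ ‖y‖} := fun z hz => by
    have hzn := norm_mem_Ioo_of_mem_ball_smul he (by linarith) hz
    exact ⟨by linarith, by linarith [le_max_left ‖x‖ ‖y‖]⟩
  have hS : ν {z : E | ρ - 1 < ‖z‖ ∧ ‖z‖ < max ‖x‖ ‖y‖} ≠ ∞ :=
    (measure_mono fun z hz => mem_ball_zero_iff.2 hz.2).trans_lt measure_ball_lt_top |>.ne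
  obtain ⟨hint, hint0⟩ := integrableOn_lowerEstimate_integrand hf₁c hf₁pos hf₁le hgc hg hc x y hS
  have hlow := mul_measureReal_le_setIntegral hint hint0 isOpen_ball.measurableSet
    measure_ball_lt_top.ne hB'S fun z hz =>
      le_lowerEstimate_integrand hf₁anti hf₁pos hg_mono hc hβ he hx hy hz
  have hf₁x : 0 < f₁ ‖x‖ := hf₁pos _ (by linarith)
  have hf₁y : 0 < f₁ ‖y‖ := hf₁pos _ (by linarith)
  have hxβ : f₁ ‖x‖ ≤ f₁ β :=
    hf₁anti (mem_Ioi.2 (by linarith)) (mem_Ioi.2 (by linarith)) (by linarith)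
  have hyβ : f₁ ‖y‖ ≤ f₁ β :=
    hf₁anti (mem_Ioi.2 (by linarith)) (mem_Ioi.2 (by linarith)) (by linarith)
  have hinv : (f₁ β ^ 2)⁻¹ ≤ (f₁ ‖x‖ * f₁ ‖y‖)⁻¹ :=
    inv_anti₀ (mul_pos hf₁x hf₁y) (sq (f₁ β) ▸ mul_le_mul hxβ hyβ hf₁y.le (hf₁x.le.trans hxβ))
  calc A * f₁ 2 ^ 2 * ν.real (ball 0 2⁻¹) / (f₁ β ^ 2 * Real.exp (c * g β))
      = A * (f₁ β ^ 2)⁻¹ * (f₁ 2 ^ 2 * Real.exp (-(c * g β)) * ν.real B') := by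
        rw [show ν.real B' = ν.real (ball 0 2⁻¹) from Measure.addHaar_real_ball_center _ _ _,
          Real.exp_neg]
        ring
    _ ≤ A * (f₁ ‖x‖ * f₁ ‖y‖)⁻¹ * (∫ z in {z : E | ρ - 1 < ‖z‖ ∧ ‖z‖ < max ‖x‖ ‖y‖},
        f₁ ‖x - z‖ * f₁ ‖z - y‖ * Real.exp (-(c * g ‖z‖)) ∂ν) := by
        gcongr
    _ ≤ q x y := hq x y (by linarith) (by linarith)

lemma ofReal_le_withDensity_ball [NormedSpace ℝ E] [FiniteDimensional ℝ E]
    [ν.IsAddHaarMeasure] {φ₀ : E → ℝ} {C₁₀ C₆ C₇ β : ℝ} {e : E} (he : ‖e‖ = 1)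
    (hf₁ : ∀ r, f₁ r = min (f r) 1) (hf_pos : ∀ r > 0, 0 < f r) (hf_anti : AntitoneOn f (Ioi 0))
    (hg_mono : MonotoneOn g (Ici 0)) (hg : ∀ r ≥ 0, 0 < g r)
    (hφ₀ : ∀ x, C₁₀⁻¹ * (f₁ ‖x‖ / g ‖x‖) ≤ φ₀ x) (hC₁₀ : 0 < C₁₀) (hC₆ : 0 < C₆) (hC₇ : 1 ≤ C₇)
    (hf_comp : f β ≤ C₇ * f (β + 1)) (hg_comp : g (β + 1) ≤ C₆ * g β) (hfβ : f β ≤ 1)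
    (hβ : 2⁻¹ ≤ β) :
    ENNReal.ofReal ((C₁₀⁻¹ * (f β / (C₇ * C₆ * g β))) ^ 2 * ν.real (ball 0 2⁻¹)) ≤
      ν.withDensity (fun x => ENNReal.ofReal (φ₀ x ^ 2)) (ball ((β + 2⁻¹) • e) 2⁻¹) := by
  have hm : 0 ≤ C₁₀⁻¹ * (f β / (C₇ * C₆ * g β)) := by
    have := hf_pos β (by linarith); have := hg β (by linarith); positivity
  rw [ENNReal.ofReal_mul (sq_nonneg _), ofReal_measureReal measure_ball_lt_top.ne,
    ← Measure.addHaar_ball_center ν ((β + 2⁻¹) • e)]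
  refine mul_measure_le_withDensity_apply isOpen_ball.measurableSet fun x hx =>
    ENNReal.ofReal_le_ofReal <|
      pow_le_pow_left₀ hm ((mul_le_mul_of_nonneg_left ?_ ?_).trans (hφ₀ x)) 2
  · have hxn := norm_mem_Ioo_of_mem_ball_smul he (by linarith) hx
    rw [hf₁]
    exact le_min_div_of_comparison hf_pos hf_anti hg_mono (hg _ (norm_nonneg _)) hC₇ hf_comp
      hg_comp hfβ (by linarith) ⟨by linarith, by linarith⟩
  · positivity

end Kernel

theorem stmt3_general
    (d : ℕ) (hd : 1 ≤ d)
    (f g : ℝ → ℝ)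
    (hf_pos : ∀ r > 0, 0 < f r)
    (hf_anti : StrictAntiOn f (Set.Ioi 0))
    (hf_cont : ContinuousOn f (Set.Ioi 0))
    (hf_lim : Tendsto f atTop (𝓝 0))
    (f₁ : ℝ → ℝ) (hf₁ : ∀ r, f₁ r = min (f r) 1)
    (hg_pos : ∀ r ≥ 0, 0 < g r)
    (hg_mono : StrictMonoOn g (Set.Ici 0))
    (hg_cont : ContinuousOn g (Set.Ici 0))
    -- Condition (D)
    (hD : ∃ R > 0, (∀ r ≥ R, f r < 1) ∧
      AntitoneOn (fun r => g r / |Real.log (f r)|) (Set.Ici R) ∧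
      Tendsto (fun r => g r / |Real.log (f r)|) atTop (𝓝 0))
    -- ground state and the measure μ
    (φ₀ : EuclideanSpace ℝ (Fin d) → ℝ)
    (C₁₀ : ℝ) (hC₁₀ : 1 ≤ C₁₀)
    (hφ₀ : ∀ x : EuclideanSpace ℝ (Fin d),
      C₁₀⁻¹ * (f₁ ‖x‖ / g ‖x‖) ≤ φ₀ x ∧ φ₀ x ≤ C₁₀ * (f₁ ‖x‖ / g ‖x‖))
    (μ : Measure (EuclideanSpace ℝ (Fin d)))
    (hμ : μ = volume.withDensity (fun x => ENNReal.ofReal (φ₀ x ^ 2)))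
    (hμ_prob : IsProbabilityMeasure μ)
    -- comparison conditions
    (C₆ C₇ R₀ : ℝ) (hC₆ : 1 ≤ C₆) (hC₇ : 1 ≤ C₇)
    (hf_comp : ∀ r ≥ R₀, f r ≤ C₇ * f (r + 1))
    (hg_comp : ∀ r ≥ R₀, g (r + 1) ≤ C₆ * g r)
    (t : ℝ) (ht : 0 < t)
    -- the semigroup kernels
    (q : ℝ → EuclideanSpace ℝ (Fin d) → EuclideanSpace ℝ (Fin d) → ℝ)
    (hq_mass : ∀ s > 0, ∀ x : EuclideanSpace ℝ (Fin d), (∫ y, q s x y ∂μ) = 1)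
    -- lower estimate
    (ρ c₁ K' lam₀ : ℝ) (hρ : 1 < ρ) (hc₁ : 0 < c₁) (hK' : 0 < K')
    (hL : ∀ s ∈ Set.Icc t (2 * t), ∀ x y : EuclideanSpace ℝ (Fin d),
      ρ < ‖x‖ → ρ < ‖y‖ →
      c₁ * Real.exp (lam₀ * s) * (f₁ ‖x‖ * f₁ ‖y‖)⁻¹ *
          (∫ z in {z : EuclideanSpace ℝ (Fin d) | ρ - 1 < ‖z‖ ∧ ‖z‖ < max ‖x‖ ‖y‖},
            f₁ ‖x - z‖ * f₁ ‖z - y‖ * Real.exp (-(K' * s * g ‖z‖))) ≤ q s x y) :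
    ∃ C' > 0, ∃ κ' > 0, ∃ r₀ > ρ,
      (StrictAntiOn (fun r => f r ^ 2 * Real.exp (K' * t * g r)) (Set.Ici r₀) ∧
        Tendsto (fun r => f r ^ 2 * Real.exp (K' * t * g r)) atTop (𝓝 0)) ∧
      ∀ u ≥ κ' / (f r₀ ^ 2 * Real.exp (K' * t * g r₀)), ∀ β ≥ r₀,
        f β ^ 2 * Real.exp (K' * t * g β) = κ' / u →
        ENNReal.ofReal ((1 / u) * (C' / (g β ^ 2 * Real.exp (K' * t * g β)))) ≤
          ⨆ (h : EuclideanSpace ℝ (Fin d) → ℝ) (_ : Measurable h ∧ (∀ y, 0 ≤ h y) ∧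
              Integrable h μ ∧ (∫ y, h y ∂μ) = 1),
            μ {x : EuclideanSpace ℝ (Fin d) | u < ∫ y, q t x y * h y ∂μ} := by
  obtain ⟨r₀, hr₀, hr₀_pos, hf1, ha_anti, ha_le⟩ :=
    exists_ge_of_conditionD (K' * t) (max (ρ + 1) R₀) hD
  obtain ⟨hf₁c, hf₁anti, hf₁pos, hf₁le⟩ :=
    properties_of_eq_min_one hf₁ hf_pos hf_anti.antitoneOn hf_cont
  obtain ⟨e, he⟩ : ∃ e : EuclideanSpace ℝ (Fin d), ‖e‖ = 1 :=
    ⟨EuclideanSpace.single ⟨0, hd⟩ 1, by simp⟩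
  set V := volume.real (ball (0 : EuclideanSpace ℝ (Fin d)) 2⁻¹)
  have hV : 0 < V :=
    ENNReal.toReal_pos (measure_ball_pos _ _ (by norm_num)).ne' measure_ball_lt_top.ne
  set κ' := c₁ * Real.exp (lam₀ * t) * f₁ 2 ^ 2 * V / 2
  have hκ' : 0 < κ' := by have := hf₁pos 2 two_pos; positivity
  refine ⟨κ' * (C₁₀⁻¹ / (C₇ * C₆)) ^ 2 * V, by positivity, κ', hκ', r₀,
    by linarith [le_max_left (ρ + 1) R₀],
    ⟨strictAntiOn_sq_mul_exp (by positivity) hr₀_pos hf_pos hf_anti hf1 ha_anti ha_le,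
      tendsto_sq_mul_exp_zero hf_pos hf_lim hr₀_pos hf1 ha_le⟩, fun u hu β hβ hGβ => ?_⟩
  have hβρ : ρ + 1 ≤ β := (le_max_left _ _).trans (hr₀.trans hβ)
  have hβR₀ : R₀ ≤ β := (le_max_right _ _).trans (hr₀.trans hβ)
  have hu_pos : 0 < u := hu.trans_lt' (by have := hf_pos r₀ hr₀_pos; positivity)
  have hq : ∀ x ∈ ball ((β + 2⁻¹) • e) 2⁻¹, ∀ y ∈ ball ((β + 2⁻¹) • e) 2⁻¹,
      2 * κ' / (f₁ β ^ 2 * Real.exp (K' * t * g β)) ≤ q t x y := fun x hx y hy =>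
    (le_kernel_of_lowerEstimate hf₁c hf₁anti hf₁pos hf₁le hg_cont hg_mono.monotoneOn hg_pos
      (by positivity) (by positivity) (by linarith) (by linarith) he
      (hL t ⟨le_rfl, by linarith⟩) hx hy).trans_eq' (by ring)
  rw [hf₁ β, min_eq_left (hf1 β hβ).le, hGβ, mul_div_assoc, div_div_cancel₀ hκ'.ne'] at hq
  have hvalue : 1 / u * (κ' * (C₁₀⁻¹ / (C₇ * C₆)) ^ 2 * V / (g β ^ 2 * Real.exp (K' * t * g β))) =
      (C₁₀⁻¹ * (f β / (C₇ * C₆ * g β))) ^ 2 * V := by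
    rw [show 1 / u = f β ^ 2 * Real.exp (K' * t * g β) / κ' by rw [hGβ]; field_simp]
    field_simp
  rw [hvalue]
  refine (hμ ▸ ofReal_le_withDensity_ball he hf₁ hf_pos hf_anti.antitoneOn hg_mono.monotoneOn
    hg_pos (fun x => (hφ₀ x).1) (by linarith) (by linarith) hC₇ (hf_comp β hβR₀)
    (hg_comp β hβR₀) (hf1 β hβ).le (by linarith)).trans ?_
  exact measure_le_iSup_measure_lt_integral
    (fun x => .of_integral_ne_zero (by rw [hq_mass t ht x]; exact one_ne_zero))
    isOpen_ball.measurableSet (by linarith : u < 2 * u) hq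

/-- Theorem `prop:main2`. There exist `C' > 0`, `κ' > 0` and `r₀ > ρ` such
that `G(r) = f(r)² e^{K' t g(r)}` is strictly decreasing on `[r₀,∞)` with `G → 0`, and for
every `u ≥ κ'/G(r₀)` and `β ≥ r₀` with `G(β) = κ'/u`,
`sup over densities h of μ({Q_t h > u}) ≥ (1/u) · C'/(g(β)² e^{K' t g(β)})`. -/
theorem stmt3
    (d : ℕ) (hd : 1 ≤ d)
    (f g : ℝ → ℝ)
    (hf_pos : ∀ r > 0, 0 < f r)
    (hf_anti : StrictAntiOn f (Set.Ioi 0))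
    (hf_cont : ContinuousOn f (Set.Ioi 0))
    (hf_lim : Tendsto f atTop (𝓝 0))
    (f₁ : ℝ → ℝ) (hf₁ : ∀ r, f₁ r = min (f r) 1)
    (hg_pos : ∀ r ≥ 0, 0 < g r)
    (hg_mono : StrictMonoOn g (Set.Ici 0))
    (hg_cont : ContinuousOn g (Set.Ici 0))
    (hg_lim : Tendsto g atTop atTop)
    -- Condition (D)
    (hD : ∃ R > 0, (∀ r ≥ R, f r < 1) ∧
      AntitoneOn (fun r => g r / |Real.log (f r)|) (Set.Ici R) ∧
      Tendsto (fun r => g r / |Real.log (f r)|) atTop (𝓝 0))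
    -- ground state and the measure μ
    (φ₀ : EuclideanSpace ℝ (Fin d) → ℝ) (hφ₀_meas : Measurable φ₀)
    (hφ₀_pos : ∀ x, 0 < φ₀ x)
    (C₁₀ : ℝ) (hC₁₀ : 1 ≤ C₁₀)
    (hφ₀ : ∀ x : EuclideanSpace ℝ (Fin d),
      C₁₀⁻¹ * (f₁ ‖x‖ / g ‖x‖) ≤ φ₀ x ∧ φ₀ x ≤ C₁₀ * (f₁ ‖x‖ / g ‖x‖))
    (μ : Measure (EuclideanSpace ℝ (Fin d)))
    (hμ : μ = volume.withDensity (fun x => ENNReal.ofReal (φ₀ x ^ 2)))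
    (hμ_prob : IsProbabilityMeasure μ)
    -- comparison conditions
    (C₆ C₇ R₀ : ℝ) (hC₆ : 1 ≤ C₆) (hC₇ : 1 ≤ C₇) (hR₀ : 1 ≤ R₀)
    (hf_comp : ∀ r ≥ R₀, f r ≤ C₇ * f (r + 1))
    (hg_comp : ∀ r ≥ R₀, g (r + 1) ≤ C₆ * g r)
    (t : ℝ) (ht : 0 < t)
    -- the semigroup kernels
    (q : ℝ → EuclideanSpace ℝ (Fin d) → EuclideanSpace ℝ (Fin d) → ℝ)
    (hq_meas : ∀ s > 0, Measurable (Function.uncurry (q s)))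
    (hq_nonneg : ∀ s > 0, ∀ x y, 0 ≤ q s x y)
    (hq_CK : ∀ s > 0, ∀ s' > 0, ∀ x y : EuclideanSpace ℝ (Fin d),
      q (s + s') x y = ∫ z, q s x z * q s' z y ∂μ)
    (hq_mass : ∀ s > 0, ∀ x : EuclideanSpace ℝ (Fin d), (∫ y, q s x y ∂μ) = 1)
    -- lower estimate
    (ρ c₁ K' lam₀ : ℝ) (hρ : 1 < ρ) (hc₁ : 0 < c₁) (hK' : 0 < K')
    (hL : ∀ s ∈ Set.Icc t (2 * t), ∀ x y : EuclideanSpace ℝ (Fin d),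
      ρ < ‖x‖ → ρ < ‖y‖ →
      c₁ * Real.exp (lam₀ * s) * (f₁ ‖x‖ * f₁ ‖y‖)⁻¹ *
          (∫ z in {z : EuclideanSpace ℝ (Fin d) | ρ - 1 < ‖z‖ ∧ ‖z‖ < max ‖x‖ ‖y‖},
            f₁ ‖x - z‖ * f₁ ‖z - y‖ * Real.exp (-(K' * s * g ‖z‖))) ≤ q s x y) :
    ∃ C' > 0, ∃ κ' > 0, ∃ r₀ > ρ,
      (StrictAntiOn (fun r => f r ^ 2 * Real.exp (K' * t * g r)) (Set.Ici r₀) ∧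
        Tendsto (fun r => f r ^ 2 * Real.exp (K' * t * g r)) atTop (𝓝 0)) ∧
      ∀ u ≥ κ' / (f r₀ ^ 2 * Real.exp (K' * t * g r₀)), ∀ β ≥ r₀,
        f β ^ 2 * Real.exp (K' * t * g β) = κ' / u →
        ENNReal.ofReal ((1 / u) * (C' / (g β ^ 2 * Real.exp (K' * t * g β)))) ≤
          ⨆ (h : EuclideanSpace ℝ (Fin d) → ℝ) (_ : Measurable h ∧ (∀ y, 0 ≤ h y) ∧
              Integrable h μ ∧ (∫ y, h y ∂μ) = 1),
            μ {x : EuclideanSpace ℝ (Fin d) | u < ∫ y, q t x y * h y ∂μ} :=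
  stmt3_general d hd f g hf_pos hf_anti hf_cont hf_lim f₁ hf₁ hg_pos hg_mono hg_cont hD φ₀ C₁₀ hC₁₀
    hφ₀ μ hμ hμ_prob C₆ C₇ R₀ hC₆ hC₇ hf_comp hg_comp t ht q hq_mass ρ c₁ K' lam₀ hρ hc₁ hK' hL
end

section
/- For all a, b, t > 0 there exists r₀ > 0 such that the function r ↦ f₁(r)^a e^{b t g(r)} is strictly decreasing on [r₀, ∞) and tends to 0 as r → ∞. -/
/-!
For `r` large, `f r < 1`, so with `L = |log f|` and `Q = g / L` the function equals
`exp (L * (b t Q - a))`. Condition (D) makes `b t Q - a` antitone and eventually negative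
(it tends to `-a`), while `L` is positive, strictly increasing and tends to `∞`; hence the
exponent is strictly decreasing and tends to `-∞`.
-/

open Filter Topology Set

theorem StrictMonoOn.mul_antitoneOn_of_nonneg_of_neg {α β : Type*} [Preorder α] [Ring β]
    [PartialOrder β] [IsStrictOrderedRing β] {s : Set α} {u v : α → β}
    (hu : StrictMonoOn u s) (hu₀ : ∀ x ∈ s, 0 ≤ u x)
    (hv : AntitoneOn v s) (hv₀ : ∀ x ∈ s, v x < 0) :
    StrictAntiOn (fun x => u x * v x) s := by
  intro x hx y hy hxy
  calc u y * v y < u x * v y := mul_lt_mul_of_neg_right (hu hx hy hxy) (hv₀ y hy)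
    _ ≤ u x * v x := mul_le_mul_of_nonneg_left (hv hx hy hxy.le) (hu₀ x hx)

namespace Real

theorem strictMonoOn_abs_log_comp {α : Type*} [Preorder α] {f : α → ℝ} {s : Set α}
    (hf : StrictAntiOn f s) (hf₀ : ∀ x ∈ s, 0 < f x) (hf₁ : ∀ x ∈ s, f x < 1) :
    StrictMonoOn (fun x => |log (f x)|) s := by
  intro x hx y hy hxy
  dsimp only
  rw [abs_of_neg (log_neg (hf₀ x hx) (hf₁ x hx)), abs_of_neg (log_neg (hf₀ y hy) (hf₁ y hy)),
    neg_lt_neg_iff]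
  exact log_lt_log (hf₀ y hy) (hf hx hy hxy)

theorem tendsto_abs_log_comp_atTop {α : Type*} {l : Filter α} {f : α → ℝ}
    (hf : Tendsto f l (𝓝 0)) (hf₀ : ∀ᶠ x in l, f x ≠ 0) :
    Tendsto (fun x => |log (f x)|) l atTop :=
  tendsto_abs_atBot_atTop.comp <| tendsto_log_nhdsNE_zero.comp <|
    tendsto_nhdsWithin_of_tendsto_nhds_of_eventually_within f hf hf₀

theorem pow_mul_exp_eq_exp_abs_log_mul {x : ℝ} (hx₀ : 0 < x) (hx₁ : x < 1) (n : ℕ) (c y : ℝ) :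
    x ^ n * exp (c * y) = exp (|log x| * (c * (y / |log x|) - n)) := by
  have hlog : log x ≠ 0 := (log_neg hx₀ hx₁).ne
  rw [abs_of_neg (log_neg hx₀ hx₁), ← exp_log (pow_pos hx₀ n), ← exp_add, log_pow]
  congr 1
  field_simp
  ring

end Real

open Real in
theorem stmt7_general
    (f g : ℝ → ℝ)
    (hf_pos : ∀ r > 0, 0 < f r)
    (hf_anti : StrictAntiOn f (Set.Ioi 0))
    (hf_lim : Tendsto f atTop (𝓝 0))
    (f₁ : ℝ → ℝ) (hf₁ : ∀ r, f₁ r = min (f r) 1)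
    -- Condition (D)
    (hD : ∃ R > 0, (∀ r ≥ R, f r < 1) ∧
      AntitoneOn (fun r => g r / |Real.log (f r)|) (Set.Ici R) ∧
      Tendsto (fun r => g r / |Real.log (f r)|) atTop (𝓝 0)) :
    ∀ a > 0, ∀ b > 0, ∀ t > 0, ∃ r₀ > 0,
      StrictAntiOn (fun r => f₁ r ^ a * Real.exp (b * t * g r)) (Set.Ici r₀) ∧
      Tendsto (fun r => f₁ r ^ a * Real.exp (b * t * g r)) atTop (𝓝 0) := by
  obtain ⟨R, hR, hf_lt_one, hQ_anti, hQ_lim⟩ := hD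
  intro a ha b hb t ht
  have ha' : -(a : ℝ) < 0 := neg_neg_of_pos (Nat.cast_pos.2 ha)
  set L := fun r => |log (f r)|
  set v := fun r => b * t * (g r / |log (f r)|) - a
  have hv_lim : Tendsto v atTop (𝓝 (-a)) := by
    simpa using (hQ_lim.const_mul (b * t)).sub_const (a : ℝ)
  obtain ⟨N, hv_neg⟩ := eventually_atTop.1 (hv_lim.eventually (gt_mem_nhds ha'))
  have hf_pos' : ∀ r ∈ Ici R, 0 < f r := fun r hr => hf_pos r (hR.trans_le hr)
  have h_eq : EqOn (fun r => exp (L r * v r)) (fun r => f₁ r ^ a * exp (b * t * g r)) (Ici R) :=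
    fun r hr => by
      simp only [L, v, hf₁, min_eq_left (hf_lt_one r hr).le]
      exact (pow_mul_exp_eq_exp_abs_log_mul (hf_pos' r hr) (hf_lt_one r hr) a _ _).symm
  have hsub : Ici (max R N) ⊆ Ici R := Ici_subset_Ici.2 (le_max_left R N)
  refine ⟨max R N, hR.trans_le (le_max_left R N), ?_, ?_⟩
  · have hL : StrictMonoOn L (Ici R) :=
      strictMonoOn_abs_log_comp (hf_anti.mono fun r hr => hR.trans_le hr) hf_pos' hf_lt_one
    have hv : AntitoneOn v (Ici R) := fun x hx y hy hxy =>
      sub_le_sub_right (mul_le_mul_of_nonneg_left (hQ_anti hx hy hxy) (by positivity)) _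
    refine (exp_strictMono.comp_strictAntiOn ?_).congr (h_eq.mono hsub)
    exact (hL.mono hsub).mul_antitoneOn_of_nonneg_of_neg (fun _ _ => abs_nonneg _)
      (hv.mono hsub) fun r hr => hv_neg r (le_of_max_le_right hr)
  · have hL_lim : Tendsto L atTop atTop :=
      tendsto_abs_log_comp_atTop hf_lim <|
        (eventually_ge_atTop R).mono fun r hr => (hf_pos' r hr).ne'
    exact (tendsto_exp_atBot.comp (hL_lim.atTop_mul_neg ha' hv_lim)).congr'
      ((eventually_ge_atTop R).mono fun r hr => h_eq hr)

/-- For all `a, b, t > 0` there exists `r₀ > 0` such that the function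
`r ↦ f₁(r)^a * exp(b t g(r))` is strictly decreasing on `[r₀, ∞)` and tends to `0` at `∞`. -/
theorem stmt7
    (f g : ℝ → ℝ)
    (hf_pos : ∀ r > 0, 0 < f r)
    (hf_anti : StrictAntiOn f (Set.Ioi 0))
    (hf_cont : ContinuousOn f (Set.Ioi 0))
    (hf_lim : Tendsto f atTop (𝓝 0))
    (f₁ : ℝ → ℝ) (hf₁ : ∀ r, f₁ r = min (f r) 1)
    (hg_pos : ∀ r ≥ 0, 0 < g r)
    (hg_mono : StrictMonoOn g (Set.Ici 0))
    (hg_cont : ContinuousOn g (Set.Ici 0))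
    (hg_lim : Tendsto g atTop atTop)
    -- Condition (D)
    (hD : ∃ R > 0, (∀ r ≥ R, f r < 1) ∧
      AntitoneOn (fun r => g r / |Real.log (f r)|) (Set.Ici R) ∧
      Tendsto (fun r => g r / |Real.log (f r)|) atTop (𝓝 0)) :
    ∀ a > 0, ∀ b > 0, ∀ t > 0, ∃ r₀ > 0,
      StrictAntiOn (fun r => f₁ r ^ a * Real.exp (b * t * g r)) (Set.Ici r₀) ∧
      Tendsto (fun r => f₁ r ^ a * Real.exp (b * t * g r)) atTop (𝓝 0) :=
  stmt7_general f g hf_pos hf_anti hf_lim f₁ hf₁ hD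
end

section
/- For every δ > 0, lim_{u→∞} g(α(u))² e^{K t g(α(u))} / u^δ = 0 and lim_{u→∞} g(β(u))² e^{K̃ t g(β(u))} / u^δ = 0. -/
/-!
Condition (D) says that `g = o(log f)` at infinity. Along `α` one has
`log f (α u) = (log κ - log u) / 2`, and along `β` the equation `G (β u) = κ' / u` reads
`log f (β u) + (K' t / 2) g (β u) = (log κ' - log u) / 2`; the term `g (β u)` is negligible
against `log f (β u)` and can be absorbed. Hence `g ∘ α` and `g ∘ β` are `o(log u)`, and then
`g² e^{c g} ≤ e^{(2 + |c|) |g|} ≤ u^{δ/2}` eventually.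
-/

open Filter Topology Set Asymptotics

lemma sq_mul_exp_le_exp_abs (c x : ℝ) : x ^ 2 * Real.exp (c * x) ≤ Real.exp ((2 + |c|) * |x|) := by
  have hsq : x ^ 2 ≤ Real.exp (2 * |x|) := by
    calc x ^ 2 = |x| ^ 2 := (sq_abs x).symm
      _ ≤ Real.exp |x| ^ 2 := by
          gcongr; linarith [Real.add_one_le_exp |x|]
      _ = Real.exp (2 * |x|) := by rw [← Real.exp_nat_mul]; norm_num
  have hexp : Real.exp (c * x) ≤ Real.exp (|c| * |x|) :=
    Real.exp_le_exp.2 (by rw [← abs_mul]; exact le_abs_self _)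
  calc x ^ 2 * Real.exp (c * x) ≤ Real.exp (2 * |x|) * Real.exp (|c| * |x|) := by gcongr
    _ = Real.exp ((2 + |c|) * |x|) := by rw [← Real.exp_add]; ring_nf

lemma tendsto_sq_mul_exp_div_rpow_of_isLittleO_log {h : ℝ → ℝ} (ho : h =o[atTop] Real.log)
    (c : ℝ) {δ : ℝ} (hδ : 0 < δ) :
    Tendsto (fun u => h u ^ 2 * Real.exp (c * h u) / u ^ δ) atTop (𝓝 0) := by
  refine squeeze_zero' ?_ ?_ (tendsto_rpow_neg_atTop (half_pos hδ))
  · filter_upwards [eventually_gt_atTop 0] with u hu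
    have := Real.rpow_pos_of_pos hu δ
    positivity
  · filter_upwards [ho.bound (by positivity : 0 < δ / (2 * (2 + |c|))),
      eventually_ge_atTop 1] with u hbound hu
    have hu0 : 0 < u := one_pos.trans_le hu
    rw [Real.norm_eq_abs, Real.norm_of_nonneg (Real.log_nonneg hu)] at hbound
    have hexp : (2 + |c|) * |h u| ≤ δ / 2 * Real.log u := by
      calc (2 + |c|) * |h u| ≤ (2 + |c|) * (δ / (2 * (2 + |c|)) * Real.log u) := by gcongr
        _ = δ / 2 * Real.log u := by field_simp
    calc h u ^ 2 * Real.exp (c * h u) / u ^ δ ≤ u ^ (δ / 2) / u ^ δ := by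
          gcongr
          rw [Real.rpow_def_of_pos hu0]
          exact (sq_mul_exp_le_exp_abs c (h u)).trans (Real.exp_le_exp.2 (by linarith))
      _ = u ^ (-(δ / 2)) := by rw [← Real.rpow_sub hu0]; ring_nf

lemma isLittleO_of_tendsto_div_abs {ι : Type*} {l : Filter ι} {u v : ι → ℝ}
    (hv : ∀ᶠ i in l, v i ≠ 0) (h : Tendsto (fun i => u i / |v i|) l (𝓝 0)) : u =o[l] v := by
  refine (isLittleO_iff_tendsto' (hv.mono fun i hi h0 => absurd h0 hi)).2 ?_
  rw [tendsto_zero_iff_norm_tendsto_zero] at h ⊢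
  simpa only [norm_div, Real.norm_eq_abs, abs_abs] using h

lemma Asymptotics.IsLittleO.of_add_const_mul_isBigO {ι : Type*} {l : Filter ι} {x v w : ι → ℝ}
    (c : ℝ) (hx : x =o[l] v) (hv : (fun i => v i + c * x i) =O[l] w) : x =o[l] w :=
  hx.trans_isBigO ((hx.const_mul_left c).right_isTheta_add'.isBigO.trans hv)

lemma isBigO_log_sub_log_div_two (k : ℝ) :
    (fun u => (Real.log k - Real.log u) / 2) =O[atTop] Real.log := by
  simpa only [div_eq_inv_mul] using
    (Real.isLittleO_const_log_atTop.isBigO.sub (isBigO_refl _ _)).const_mul_left 2⁻¹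

lemma tendsto_atTop_of_invOn_of_strictAntiOn {f finv : ℝ → ℝ}
    (hf_anti : StrictAntiOn f (Ioi 0)) (hf_bij : BijOn f (Ioi 0) (Ioi 0))
    (hf_inv : InvOn finv f (Ioi 0) (Ioi 0)) : Tendsto finv (𝓝[>] 0) atTop := by
  refine tendsto_atTop.2 fun b => ?_
  have hM : (0 : ℝ) < max b 1 := lt_max_of_lt_right one_pos
  filter_upwards [self_mem_nhdsWithin, nhdsWithin_le_nhds (gt_mem_nhds (hf_bij.mapsTo hM))]
    with y (hy : 0 < y) hyM
  have hfinv : 0 < finv y := (hf_bij.symm hf_inv.symm).mapsTo hy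
  rw [← hf_inv.2 hy] at hyM
  exact (le_max_left _ _).trans ((hf_anti.lt_iff_gt hfinv hM).1 hyM).le

lemma isLittleO_log_of_tendsto_div_abs_log {f g : ℝ → ℝ} {R : ℝ} (hR : 0 < R)
    (hf_pos : MapsTo f (Ioi 0) (Ioi 0)) (hf_lt : ∀ r ≥ R, f r < 1)
    (hlim : Tendsto (fun r => g r / |Real.log (f r)|) atTop (𝓝 0)) :
    g =o[atTop] fun r => Real.log (f r) := by
  refine isLittleO_of_tendsto_div_abs ?_ hlim
  filter_upwards [eventually_ge_atTop R] with r hr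
  exact (Real.log_neg (hf_pos (hR.trans_le hr)) (hf_lt r hr)).ne

lemma tendsto_div_rpow_nhdsGT_zero {k p : ℝ} (hk : 0 < k) (hp : 0 < p) :
    Tendsto (fun u : ℝ => (k / u) ^ p) atTop (𝓝[>] 0) :=
  tendsto_nhdsWithin_iff.2
    ⟨(tendsto_const_nhds.div_atTop tendsto_id).rpow_const_nhds_zero hp, by
      filter_upwards [eventually_gt_atTop 0] with u hu
      exact Real.rpow_pos_of_pos (div_pos hk hu) p⟩

lemma log_rpow_half_div {k u : ℝ} (hk : 0 < k) (hu : 0 < u) :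
    Real.log ((k / u) ^ ((1 : ℝ) / 2)) = (Real.log k - Real.log u) / 2 := by
  rw [Real.log_rpow (div_pos hk hu), Real.log_div hk.ne' hu.ne']
  ring

lemma log_add_half_mul_eq_of_sq_mul_exp_eq {y a z k u : ℝ} (hy : 0 < y) (hk : 0 < k)
    (hu : 0 < u) (h : y ^ 2 * Real.exp (a * z) = k / u) :
    Real.log y + a / 2 * z = (Real.log k - Real.log u) / 2 := by
  have hlog := congrArg Real.log h
  rw [Real.log_mul (by positivity) (Real.exp_ne_zero _), Real.log_pow, Real.log_exp,
    Real.log_div hk.ne' hu.ne'] at hlog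
  push_cast at hlog
  linarith

theorem stmt10_general
    (f finv : ℝ → ℝ)
    (hf_anti : StrictAntiOn f (Set.Ioi 0))
    (hf_bij : Set.BijOn f (Set.Ioi 0) (Set.Ioi 0))
    (hf_inv : Set.InvOn finv f (Set.Ioi 0) (Set.Ioi 0))
    (g : ℝ → ℝ)
    -- Condition (D)
    (hD : ∃ R > 0, (∀ r ≥ R, f r < 1) ∧
      AntitoneOn (fun r => g r / |Real.log (f r)|) (Set.Ici R) ∧
      Tendsto (fun r => g r / |Real.log (f r)|) atTop (𝓝 0))
    (K K' t κ κ' : ℝ) (hκ : 0 < κ) (hκ' : 0 < κ')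
    (α : ℝ → ℝ) (hα : ∀ u > 0, α u = finv ((κ / u) ^ ((1:ℝ) / 2)))
    (G : ℝ → ℝ) (hG : ∀ r, G r = f r ^ 2 * Real.exp (K' * t * g r))
    (u₀ : ℝ) (β : ℝ → ℝ)
    (hβ : ∀ u ≥ u₀, G (β u) = κ' / u)
    (hβ_lim : Tendsto β atTop atTop) :
    ∀ δ > 0,
      Tendsto (fun u => g (α u) ^ 2 * Real.exp (K * t * g (α u)) / u ^ δ) atTop (𝓝 0) ∧
      Tendsto (fun u => g (β u) ^ 2 * Real.exp (K' * t * g (β u)) / u ^ δ) atTop (𝓝 0) := by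
  obtain ⟨R, hR, hf_lt, -, hlim⟩ := hD
  have hgo := isLittleO_log_of_tendsto_div_abs_log hR hf_bij.mapsTo hf_lt hlim
  have hs := tendsto_div_rpow_nhdsGT_zero hκ (by norm_num : (0 : ℝ) < 1 / 2)
  have hα_top : Tendsto α atTop atTop :=
    ((tendsto_atTop_of_invOn_of_strictAntiOn hf_anti hf_bij hf_inv).comp hs).congr'
      (by filter_upwards [eventually_gt_atTop 0] with u hu using (hα u hu).symm)
  have hgα : (fun u => g (α u)) =o[atTop] Real.log := by
    refine (hgo.comp_tendsto hα_top).trans_isBigO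
      ((isBigO_log_sub_log_div_two κ).congr' ?_ EventuallyEq.rfl)
    filter_upwards [eventually_gt_atTop 0, hs self_mem_nhdsWithin] with u hu hsu
    simp only [Function.comp_apply, hα u hu, hf_inv.2 hsu, log_rpow_half_div hκ hu]
  have hgβ : (fun u => g (β u)) =o[atTop] Real.log := by
    refine (hgo.comp_tendsto hβ_lim).of_add_const_mul_isBigO (K' * t / 2)
      ((isBigO_log_sub_log_div_two κ').congr' ?_ EventuallyEq.rfl)
    filter_upwards [eventually_gt_atTop 0, eventually_ge_atTop u₀,
      hβ_lim.eventually_gt_atTop 0] with u hu hu₀ hβu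
    exact (log_add_half_mul_eq_of_sq_mul_exp_eq (hf_bij.mapsTo hβu) hκ' hu
      ((hG _).symm.trans (hβ u hu₀))).symm
  intro δ hδ
  have hδ' : (0 : ℝ) < δ := Nat.cast_pos.2 hδ
  simp only [← Real.rpow_natCast _ δ]
  exact ⟨tendsto_sq_mul_exp_div_rpow_of_isLittleO_log hgα _ hδ',
    tendsto_sq_mul_exp_div_rpow_of_isLittleO_log hgβ _ hδ'⟩

/-- For every `δ > 0`, `g(α(u))² e^{K t g(α(u))} / u^δ → 0` and
`g(β(u))² e^{K' t g(β(u))} / u^δ → 0` as `u → ∞`. -/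
theorem stmt10
    (f finv : ℝ → ℝ)
    (hf_pos : ∀ r > 0, 0 < f r)
    (hf_anti : StrictAntiOn f (Set.Ioi 0))
    (hf_cont : ContinuousOn f (Set.Ioi 0))
    (hf_bij : Set.BijOn f (Set.Ioi 0) (Set.Ioi 0))
    (hf_inv : Set.InvOn finv f (Set.Ioi 0) (Set.Ioi 0))
    (g : ℝ → ℝ)
    (hg_pos : ∀ r ≥ 0, 0 < g r)
    (hg_mono : StrictMonoOn g (Set.Ici 0))
    (hg_cont : ContinuousOn g (Set.Ici 0))
    (hg_lim : Tendsto g atTop atTop)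
    -- Condition (D)
    (hD : ∃ R > 0, (∀ r ≥ R, f r < 1) ∧
      AntitoneOn (fun r => g r / |Real.log (f r)|) (Set.Ici R) ∧
      Tendsto (fun r => g r / |Real.log (f r)|) atTop (𝓝 0))
    (K K' t κ κ' : ℝ) (hK : 0 < K) (hK' : 0 < K') (ht : 0 < t) (hκ : 0 < κ) (hκ' : 0 < κ')
    (α : ℝ → ℝ) (hα : ∀ u > 0, α u = finv ((κ / u) ^ ((1:ℝ) / 2)))
    (G : ℝ → ℝ) (hG : ∀ r, G r = f r ^ 2 * Real.exp (K' * t * g r))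
    (u₀ : ℝ) (β : ℝ → ℝ)
    (hβ : ∀ u ≥ u₀, G (β u) = κ' / u)
    (hβ_lim : Tendsto β atTop atTop) :
    ∀ δ > 0,
      Tendsto (fun u => g (α u) ^ 2 * Real.exp (K * t * g (α u)) / u ^ δ) atTop (𝓝 0) ∧
      Tendsto (fun u => g (β u) ^ 2 * Real.exp (K' * t * g (β u)) / u ^ δ) atTop (𝓝 0) :=
  stmt10_general f finv hf_anti hf_bij hf_inv g hD K K' t κ κ' hκ hκ' α hα G hG u₀ β hβ hβ_lim
end

section
/- lim_{u→∞} g(β(u))/g(α(u)) = 1. -/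
open Filter Topology Set Real

/-!
From `f(β)² e^{K' t g(β)} = κ'/u` one reads off `f(β) ≤ (κ'/u)^{1/2}`; condition (D) makes
`g(β)` a vanishing fraction of `|log f(β)|`, which upgrades the equation to
`f(β) ≥ (κ'/u)^{λ/2}` eventually, for every `λ > 1`. Since `f⁻¹` is decreasing, `β` is squeezed
between `f⁻¹(c s)` and `f⁻¹(d s^λ)`, where `s = (κ/u)^{1/2}` and `α = f⁻¹(s)`, and the rate
condition compares `g ∘ f⁻¹` at these points with `g(α)` up to the factors `1` and `λ^ω`, the
latter close to `1` when `λ` is.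
-/

section RightInverse

variable {α β : Type*} [LinearOrder α] [LinearOrder β] {f : α → β} {finv : β → α}
  {s : Set α} {t : Set β}

theorem StrictAntiOn.rightInvOn_le_iff (hf : StrictAntiOn f s) (hmaps : MapsTo finv t s)
    (hinv : RightInvOn finv f t) {x : α} {y : β} (hx : x ∈ s) (hy : y ∈ t) :
    finv y ≤ x ↔ f x ≤ y := by
  conv_rhs => rw [← hinv hy]
  exact (hf.le_iff_ge hx (hmaps hy)).symm

theorem StrictAntiOn.le_rightInvOn_iff (hf : StrictAntiOn f s) (hmaps : MapsTo finv t s)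
    (hinv : RightInvOn finv f t) {x : α} {y : β} (hx : x ∈ s) (hy : y ∈ t) :
    x ≤ finv y ↔ y ≤ f x := by
  conv_rhs => rw [← hinv hy]
  exact (hf.le_iff_ge (hmaps hy) hx).symm

theorem StrictAntiOn.antitoneOn_rightInvOn (hf : StrictAntiOn f s) (hmaps : MapsTo finv t s)
    (hinv : RightInvOn finv f t) : AntitoneOn finv t := fun _ hy₁ _ hy₂ h ↦
  (hf.rightInvOn_le_iff hmaps hinv (hmaps hy₁) hy₂).2 (by rwa [hinv hy₁])

end RightInverse

theorem neg_log_mul_rpow_le {c lam s : ℝ} (hc : 0 < c) (hlam : 1 ≤ lam) (hs : 0 < s)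
    (hs1 : s < 1) (hsc : s ≤ c) : -log (c * s ^ lam) ≤ 2 * lam * -log s := by
  rw [log_mul hc.ne' (rpow_pos_of_pos hs lam).ne', log_rpow hs]
  have := log_le_log hs hsc
  nlinarith [log_neg hs hs1]

theorem le_two_mul_of_monotoneOn_div_abs_log {H : ℝ → ℝ} {a c lam s : ℝ}
    (hH_anti : AntitoneOn H (Ioi 0)) (hH_log : MonotoneOn (fun s ↦ H s / |log s|) (Ioc 0 a))
    (hc : 0 < c) (hlam : 1 ≤ lam) (hs : 0 < s) (hs1 : s < 1) (hsa : s ≤ a) (hsc : s ≤ c)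
    (hHs : 0 ≤ H s) : H (c * s ^ lam) ≤ 2 * lam * H s := by
  have hcs : 0 < c * s ^ lam := by positivity
  rcases le_or_gt s (c * s ^ lam) with h | h
  · calc H (c * s ^ lam) ≤ H s := hH_anti hs hcs h
      _ ≤ 2 * lam * H s := le_mul_of_one_le_left hHs (by linarith)
  · have hlog_s := log_neg hs hs1
    have hlog_cs := log_neg hcs (h.trans hs1)
    have hmono := hH_log ⟨hcs, h.le.trans hsa⟩ ⟨hs, hsa⟩ h.le
    simp only [abs_of_neg hlog_s, abs_of_neg hlog_cs] at hmono
    rw [div_le_div_iff₀ (neg_pos.2 hlog_cs) (neg_pos.2 hlog_s)] at hmono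
    nlinarith [neg_log_mul_rpow_le hc hlam hs hs1 hsc]

theorem isBoundedUnder_rpow_ratio {H : ℝ → ℝ} {a c lam : ℝ} (ha : 0 < a)
    (hH_pos : ∀ s > 0, 0 < H s) (hH_anti : AntitoneOn H (Ioi 0))
    (hH_log : MonotoneOn (fun s ↦ H s / |log s|) (Ioc 0 a)) (hc : 0 < c) (hlam : 1 ≤ lam) :
    IsBoundedUnder (· ≤ ·) (𝓝[>] 0) (fun s ↦ H (c * s ^ lam) / H s) := by
  refine ⟨2 * lam, eventually_map.2 ?_⟩
  filter_upwards [Ioo_mem_nhdsGT (show 0 < min (min a c) 1 by positivity)] with s ⟨hs, hs'⟩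
  simp only [lt_min_iff] at hs'
  rw [div_le_iff₀ (hH_pos s hs)]
  exact le_two_mul_of_monotoneOn_div_abs_log hH_anti hH_log hc hlam hs hs'.2 hs'.1.1.le
    hs'.1.2.le (hH_pos s hs).le

def EventuallyRateBounded (H : ℝ → ℝ) (ω : ℝ) : Prop :=
  ∀ c > 0, ∀ lam ≥ (1 : ℝ), ∀ b > lam ^ ω, ∀ᶠ s in 𝓝[>] 0, H (c * s ^ lam) < b * H s

-- In `ℝ` a `limsup` of a function unbounded above is junk, so the `limsup` bound alone gives
-- nothing; the monotonicity of `H s / |log s|` supplies the missing boundedness.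
theorem eventuallyRateBounded_of_limsup_le {H : ℝ → ℝ} {a ω : ℝ} (ha : 0 < a)
    (hH_pos : ∀ s > 0, 0 < H s) (hH_anti : AntitoneOn H (Ioi 0))
    (hH_log : MonotoneOn (fun s ↦ H s / |log s|) (Ioc 0 a))
    (hrate : ∀ c > 0, ∀ lam ≥ (1 : ℝ),
      limsup (fun s ↦ H (c * s ^ lam) / H s) (𝓝[>] 0) ≤ lam ^ ω) :
    EventuallyRateBounded H ω := by
  intro c hc lam hlam b hb
  filter_upwards [eventually_lt_of_limsup_lt ((hrate c hc lam hlam).trans_lt hb)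
    (isBoundedUnder_rpow_ratio ha hH_pos hH_anti hH_log hc hlam), self_mem_nhdsWithin]
    with s hlt hs
  exact (div_lt_iff₀ (hH_pos s hs)).1 hlt

section Comparison

variable {f finv g : ℝ → ℝ}

theorem monotoneOn_comp_div_abs_log {R : ℝ} (hR : 0 < R) (hf : StrictAntiOn f (Ioi 0))
    (hmaps : MapsTo finv (Ioi 0) (Ioi 0)) (hinv : RightInvOn finv f (Ioi 0))
    (hD : AntitoneOn (fun r ↦ g r / |log (f r)|) (Ici R)) :
    MonotoneOn (fun s ↦ g (finv s) / |log s|) (Ioc 0 (f R)) := by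
  have hR_le : MapsTo finv (Ioc 0 (f R)) (Ici R) := fun s hs ↦
    (hf.le_rightInvOn_iff hmaps hinv hR hs.1).2 hs.2
  refine (hD.comp ((hf.antitoneOn_rightInvOn hmaps hinv).mono Ioc_subset_Ioi_self)
    hR_le).congr fun s hs ↦ ?_
  simp only [Function.comp_apply, hinv hs.1]

variable {ι : Type*} {l : Filter ι} {ω : ℝ} {x β : ι → ℝ}

theorem eventually_mul_lt_of_le (hf : StrictAntiOn f (Ioi 0))
    (hmaps : MapsTo finv (Ioi 0) (Ioi 0)) (hinv : RightInvOn finv f (Ioi 0))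
    (hg_pos : ∀ r ≥ 0, 0 < g r) (hg_mono : MonotoneOn g (Ici 0))
    (hrate : EventuallyRateBounded (g ∘ finv) ω) (hx : Tendsto x l (𝓝[>] 0)) {c : ℝ}
    (hc : 0 < c) (hβ : ∀ᶠ i in l, 0 < β i ∧ f (β i) ≤ x i) {a : ℝ} (ha : a < 1) :
    ∀ᶠ i in l, a * g (finv (c * x i)) < g (β i) := by
  have hx_pos : ∀ᶠ i in l, 0 < x i := hx.eventually self_mem_nhdsWithin
  rcases le_or_gt a 0 with ha0 | ha0
  · filter_upwards [hβ, hx_pos] with i ⟨hβ_pos, _⟩ hxi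
    have := hg_pos (finv (c * x i)) (Ioi_subset_Ici_self (hmaps (mul_pos hc hxi)))
    nlinarith [hg_pos (β i) hβ_pos.le]
  · have hb : (1 : ℝ) ^ ω < a⁻¹ := by rw [one_rpow]; exact (one_lt_inv₀ ha0).2 ha
    filter_upwards [hβ, hx_pos, hx.eventually (hrate c hc 1 le_rfl a⁻¹ hb)]
      with i ⟨hβ_pos, hfβ⟩ hxi hlt
    simp only [Function.comp_apply, rpow_one] at hlt
    have hle : finv (x i) ≤ β i := (hf.rightInvOn_le_iff hmaps hinv hβ_pos hxi).2 hfβ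
    calc a * g (finv (c * x i)) < a * (a⁻¹ * g (finv (x i))) := by gcongr
      _ = g (finv (x i)) := by field_simp
      _ ≤ g (β i) := hg_mono (Ioi_subset_Ici_self (hmaps hxi)) hβ_pos.le hle

theorem eventually_lt_mul_of_mul_rpow_le (hf : StrictAntiOn f (Ioi 0))
    (hmaps : MapsTo finv (Ioi 0) (Ioi 0)) (hinv : RightInvOn finv f (Ioi 0))
    (hg_mono : MonotoneOn g (Ici 0)) (hrate : EventuallyRateBounded (g ∘ finv) ω)
    (hx : Tendsto x l (𝓝[>] 0)) {c lam b : ℝ} (hc : 0 < c) (hlam : 1 ≤ lam)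
    (hb : lam ^ ω < b) (hβ : ∀ᶠ i in l, 0 < β i ∧ c * x i ^ lam ≤ f (β i)) :
    ∀ᶠ i in l, g (β i) < b * g (finv (x i)) := by
  filter_upwards [hβ, hx.eventually self_mem_nhdsWithin,
    hx.eventually (hrate c hc lam hlam b hb)] with i ⟨hβ_pos, hfβ⟩ hxi hlt
  have hcx : 0 < c * x i ^ lam := by have : 0 < x i := hxi; positivity
  have hle : β i ≤ finv (c * x i ^ lam) := (hf.le_rightInvOn_iff hmaps hinv hβ_pos hcx).2 hfβ
  exact (hg_mono hβ_pos.le (Ioi_subset_Ici_self (hmaps hcx)) hle).trans_lt hlt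

end Comparison

theorem le_rpow_half_of_sq_mul_exp_eq {y G v K : ℝ} (hy : 0 ≤ y) (hKG : 0 ≤ K * G)
    (h : y ^ 2 * exp (K * G) = v) : y ≤ v ^ ((1 : ℝ) / 2) := by
  rw [← sqrt_eq_rpow, le_sqrt hy (by rw [← h]; positivity), ← h]
  exact le_mul_of_one_le_right (sq_nonneg y) (one_le_exp hKG)

-- Taking logarithms, `G ≤ ε |log y|` forces `G ≤ -ε log v`, so `y² = v e^{-KG} ≥ v^{1 + Kε}`.
theorem rpow_le_of_sq_mul_exp_eq {y G v K ε : ℝ} (hy : 0 < y) (hy1 : y < 1) (hG : 0 ≤ G)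
    (hK : 0 ≤ K) (hKε : K * ε ≤ 1) (hGy : G ≤ ε * |log y|) (h : y ^ 2 * exp (K * G) = v) :
    v ^ ((1 + K * ε) / 2) ≤ y := by
  have hv : 0 < v := by rw [← h]; positivity
  have hlog : 2 * log y + K * G = log v := by
    rw [← h, log_mul (by positivity) (exp_pos _).ne', log_exp, log_pow]
    push_cast; ring
  rw [abs_of_neg (log_neg hy hy1), show log y = (log v - K * G) / 2 by linarith] at hGy
  have hGv : G ≤ -ε * log v := by nlinarith [mul_le_mul_of_nonneg_right hKε hG]
  rw [rpow_def_of_pos hv, ← exp_log hy, exp_le_exp]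
  nlinarith [mul_le_mul_of_nonneg_left hGv hK]

theorem div_rpow_mul_div_rpow {a b u : ℝ} (ha : 0 ≤ a) (hb : 0 < b) (hu : 0 ≤ u) (q : ℝ) :
    (a / b) ^ q * (b / u) ^ q = (a / u) ^ q := by
  rw [← mul_rpow (by positivity) (by positivity), div_mul_div_cancel₀ hb.ne']

theorem tendsto_rpow_half_div_atTop {κ : ℝ} (hκ : 0 < κ) :
    Tendsto (fun u : ℝ ↦ (κ / u) ^ ((1 : ℝ) / 2)) atTop (𝓝[>] 0) := by
  have h := ((continuousAt_rpow_const 0 ((1 : ℝ) / 2) (Or.inr (by norm_num))).tendsto).comp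
    (tendsto_const_nhds.div_atTop tendsto_id : Tendsto (fun u : ℝ ↦ κ / u) atTop (𝓝 0))
  rw [zero_rpow (by norm_num)] at h
  refine tendsto_nhdsWithin_iff.2 ⟨h, ?_⟩
  filter_upwards [eventually_gt_atTop 0] with u hu
  exact rpow_pos_of_pos (div_pos hκ hu) _

theorem exists_pos_mul_le_one_rpow_lt (K ω : ℝ) {b : ℝ} (hb : 1 < b) :
    ∃ ε > 0, K * ε ≤ 1 ∧ (1 + K * ε) ^ ω < b := by
  have hlin : ContinuousAt (fun ε : ℝ ↦ 1 + K * ε) 0 := by fun_prop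
  have hcont := (hlin.rpow_const (p := ω) (Or.inl (by simp))).tendsto
  have hsmall := (show ContinuousAt (fun ε : ℝ ↦ K * ε) 0 by fun_prop).tendsto
  simp only [mul_zero, add_zero, one_rpow] at hcont hsmall
  have hε : ∀ᶠ ε in 𝓝[>] (0 : ℝ), (K * ε ≤ 1 ∧ (1 + K * ε) ^ ω < b) ∧ 0 < ε :=
    (((hsmall.eventually (eventually_le_nhds one_pos)).and
      (hcont.eventually (eventually_lt_nhds hb))).filter_mono nhdsWithin_le_nhds).and
      self_mem_nhdsWithin
  obtain ⟨ε, ⟨hε1, hε2⟩, hε⟩ := hε.exists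
  exact ⟨ε, hε, hε1, hε2⟩

theorem stmt11_general
    (f finv : ℝ → ℝ)
    (hf_pos : ∀ r > 0, 0 < f r)
    (hf_anti : StrictAntiOn f (Set.Ioi 0))
    (hf_bij : Set.BijOn f (Set.Ioi 0) (Set.Ioi 0))
    (hf_inv : Set.InvOn finv f (Set.Ioi 0) (Set.Ioi 0))
    (g : ℝ → ℝ)
    (hg_pos : ∀ r ≥ 0, 0 < g r)
    (hg_mono : StrictMonoOn g (Set.Ici 0))
    -- Condition (D)
    (hD : ∃ R > 0, (∀ r ≥ R, f r < 1) ∧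
      AntitoneOn (fun r => g r / |Real.log (f r)|) (Set.Ici R) ∧
      Tendsto (fun r => g r / |Real.log (f r)|) atTop (𝓝 0))
    -- Rate condition on g with exponent ω
    (ω : ℝ)
    (hrate : ∀ c > 0, ∀ lam ≥ (1:ℝ),
      limsup (fun s => g (finv (c * s ^ lam)) / g (finv s)) (𝓝[>] (0:ℝ)) ≤ lam ^ ω)
    (K' t κ κ' : ℝ) (hK' : 0 < K') (ht : 0 < t) (hκ : 0 < κ) (hκ' : 0 < κ')
    (α : ℝ → ℝ) (hα : ∀ u > 0, α u = finv ((κ / u) ^ ((1:ℝ) / 2)))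
    (G : ℝ → ℝ) (hG : ∀ r, G r = f r ^ 2 * Real.exp (K' * t * g r))
    (u₀ : ℝ) (β : ℝ → ℝ)
    (hβ : ∀ u ≥ u₀, G (β u) = κ' / u)
    (hβ_lim : Tendsto β atTop atTop) :
    Tendsto (fun u => g (β u) / g (α u)) atTop (𝓝 1) := by
  obtain ⟨R, hR, hfR, hD_anti, hD_lim⟩ := hD
  have hmaps : MapsTo finv (Ioi 0) (Ioi 0) := hf_inv.1.mapsTo hf_bij.surjOn
  have hrate' : EventuallyRateBounded (g ∘ finv) ω :=
    eventuallyRateBounded_of_limsup_le (hf_pos R hR) (fun s hs ↦ hg_pos _ (hmaps hs).out.le)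
      (hg_mono.monotoneOn.comp_AntitoneOn (hf_anti.antitoneOn_rightInvOn hmaps hf_inv.2)
        (hmaps.mono_right Ioi_subset_Ici_self))
      (monotoneOn_comp_div_abs_log (g := g) hR hf_anti hmaps hf_inv.2 hD_anti) hrate
  have hgα : ∀ u > 0, 0 < g (α u) := fun u hu ↦ by
    rw [hα u hu]; exact hg_pos _ (hmaps (by positivity : (0 : ℝ) < _)).out.le
  have hβ_eq : ∀ᶠ u in atTop, 0 < u ∧ 0 < β u ∧ f (β u) < 1 ∧
      f (β u) ^ 2 * exp (K' * t * g (β u)) = κ' / u := by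
    filter_upwards [eventually_gt_atTop 0, hβ_lim.eventually_ge_atTop R,
      eventually_ge_atTop u₀] with u hu hβR hu₀
    exact ⟨hu, hR.trans_le hβR, hfR _ hβR, hG (β u) ▸ hβ u hu₀⟩
  refine tendsto_order.2 ⟨fun a ha ↦ ?_, fun b hb ↦ ?_⟩
  · have hβ_le : ∀ᶠ u in atTop, 0 < β u ∧ f (β u) ≤ (κ' / u) ^ ((1 : ℝ) / 2) := by
      filter_upwards [hβ_eq] with u ⟨_, hβ_pos, _, heq⟩
      exact ⟨hβ_pos, le_rpow_half_of_sq_mul_exp_eq (hf_pos _ hβ_pos).le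
        (mul_nonneg (by positivity) (hg_pos _ hβ_pos.le).le) heq⟩
    filter_upwards [hβ_eq, eventually_mul_lt_of_le hf_anti hmaps hf_inv.2 hg_pos
      hg_mono.monotoneOn hrate' (tendsto_rpow_half_div_atTop hκ')
      (by positivity : 0 < (κ / κ') ^ ((1 : ℝ) / 2)) hβ_le ha] with u ⟨hu, _⟩ hlt
    rwa [lt_div_iff₀ (hgα u hu), hα u hu,
      ← div_rpow_mul_div_rpow hκ.le hκ' hu.le]
  · obtain ⟨ε, hε, hKε, hb'⟩ := exists_pos_mul_le_one_rpow_lt (K' * t) ω hb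
    have hβ_ge : ∀ᶠ u in atTop, 0 < β u ∧
        (κ' / κ) ^ ((1 + K' * t * ε) / 2) * ((κ / u) ^ ((1 : ℝ) / 2)) ^ (1 + K' * t * ε)
          ≤ f (β u) := by
      filter_upwards [hβ_eq, (hD_lim.comp hβ_lim).eventually (eventually_lt_nhds hε)]
        with u ⟨hu, hβ_pos, hfβ1, heq⟩ hgε
      have hfβ := hf_pos _ hβ_pos
      have hgβ : g (β u) ≤ ε * |log (f (β u))| :=
        ((div_lt_iff₀ (abs_pos.2 (log_neg hfβ hfβ1).ne)).1 hgε).le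
      refine ⟨hβ_pos, ?_⟩
      rw [← rpow_mul (by positivity), show (1 : ℝ) / 2 * (1 + K' * t * ε) =
        (1 + K' * t * ε) / 2 by ring, div_rpow_mul_div_rpow hκ'.le hκ hu.le]
      exact rpow_le_of_sq_mul_exp_eq hfβ hfβ1 (hg_pos _ hβ_pos.le).le (by positivity) hKε
        hgβ heq
    filter_upwards [hβ_eq, eventually_lt_mul_of_mul_rpow_le hf_anti hmaps hf_inv.2
      hg_mono.monotoneOn hrate' (tendsto_rpow_half_div_atTop hκ) (by positivity)
      (le_add_of_nonneg_right (by positivity)) hb' hβ_ge] with u ⟨hu, _⟩ hlt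
    rwa [div_lt_iff₀ (hgα u hu), hα u hu]

/-- Under the rate condition on `g` with exponent `ω ≥ 0`,
`g(β(u))/g(α(u)) → 1` as `u → ∞`. -/
theorem stmt11
    (f finv : ℝ → ℝ)
    (hf_pos : ∀ r > 0, 0 < f r)
    (hf_anti : StrictAntiOn f (Set.Ioi 0))
    (hf_cont : ContinuousOn f (Set.Ioi 0))
    (hf_bij : Set.BijOn f (Set.Ioi 0) (Set.Ioi 0))
    (hf_inv : Set.InvOn finv f (Set.Ioi 0) (Set.Ioi 0))
    (g : ℝ → ℝ)
    (hg_pos : ∀ r ≥ 0, 0 < g r)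
    (hg_mono : StrictMonoOn g (Set.Ici 0))
    (hg_cont : ContinuousOn g (Set.Ici 0))
    (hg_lim : Tendsto g atTop atTop)
    -- Condition (D)
    (hD : ∃ R > 0, (∀ r ≥ R, f r < 1) ∧
      AntitoneOn (fun r => g r / |Real.log (f r)|) (Set.Ici R) ∧
      Tendsto (fun r => g r / |Real.log (f r)|) atTop (𝓝 0))
    -- Rate condition on g with exponent ω
    (ω : ℝ) (hω : 0 ≤ ω)
    (hrate : ∀ c > 0, ∀ lam ≥ (1:ℝ),
      limsup (fun s => g (finv (c * s ^ lam)) / g (finv s)) (𝓝[>] (0:ℝ)) ≤ lam ^ ω)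
    (K' t κ κ' : ℝ) (hK' : 0 < K') (ht : 0 < t) (hκ : 0 < κ) (hκ' : 0 < κ')
    (α : ℝ → ℝ) (hα : ∀ u > 0, α u = finv ((κ / u) ^ ((1:ℝ) / 2)))
    (G : ℝ → ℝ) (hG : ∀ r, G r = f r ^ 2 * Real.exp (K' * t * g r))
    (u₀ : ℝ) (β : ℝ → ℝ)
    (hβ : ∀ u ≥ u₀, G (β u) = κ' / u)
    (hβ_lim : Tendsto β atTop atTop) :
    Tendsto (fun u => g (β u) / g (α u)) atTop (𝓝 1) :=
  stmt11_general f finv hf_pos hf_anti hf_bij hf_inv g hg_pos hg_mono hD ω hrate K' t κ κ' hK' ht hκ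
    hκ' α hα G hG u₀ β hβ hβ_lim
end

section
/- lim_{u→∞} (log η(γ(u)) − log(γ(u) − σ(γ(u)))) / g(α(u)) = 0, and for every δ > 0, lim_{u→∞} v(γ(u)) / u^δ = 0, where v(r) := g(r)² e^{K̃ t g(r)} η(r)/(r − σ(r)). -/
/-!
With `β = (2 - b) / 2`, the limits in (D) and in the definition of `b` give
`log H(r) / |log f(r)| → b - 2 < -β`, so `H(r) ≤ f(r)^β` for large `r`. Since `H(γ u) = κ'/u`,
this yields `f(γ u) ≥ (κ'/u)^(1/β) = c s^λ`, where `s = f(α u) = (κ/u)^(1/2)`, `c = (κ'/κ)^(1/β)`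
and `λ = 2/β`. As `f` decreases and `g` increases, the rate condition then gives
`g(γ u) ≤ g(f⁻¹(c s^λ)) ≤ (λ^ω + 1) g(α u)`. This comparison yields the first limit. For the
second, (D) gives `g(α u) = o(|log f(α u)|) = o(log u)`, and `log v(r) = O(g(r))`, so
`log v(γ u) = o(log u)`.
-/

open Filter Topology Set Real

theorem log_sq_mul_pow_mul_mul_exp {d : ℕ} (hd : 1 ≤ d) {x r y z : ℝ} (hx : 0 < x) (hr : 0 < r)
    (hy : 0 < y) :
    log (x ^ 2 * r ^ (d - 1) * y * exp z) = 2 * log x + (((d : ℝ) - 1) * log r + log y) + z := by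
  rw [log_mul (by positivity) (exp_ne_zero _), log_mul (by positivity) hy.ne',
    log_mul (by positivity) (by positivity), log_exp, log_pow, log_pow, Nat.cast_sub hd]
  push_cast
  ring

theorem tendsto_log_div_abs_log_of_eq {d : ℕ} (hd : 1 ≤ d) {f g η H : ℝ → ℝ} {k b : ℝ}
    (hH : ∀ r, H r = f r ^ 2 * r ^ (d - 1) * η r * exp (k * g r))
    (hf : ∀ᶠ r in atTop, 0 < f r ∧ f r < 1) (hη : ∀ᶠ r in atTop, 0 < η r)
    (hg : Tendsto (fun r => g r / |log (f r)|) atTop (𝓝 0))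
    (hb : Tendsto (fun r => (((d : ℝ) - 1) * log r + log (η r)) / |log (f r)|) atTop (𝓝 b)) :
    Tendsto (fun r => log (H r) / |log (f r)|) atTop (𝓝 (b - 2)) := by
  have hlim := (hb.add (hg.const_mul k)).add_const (-2)
  rw [mul_zero, add_zero, ← sub_eq_add_neg] at hlim
  refine hlim.congr' ?_
  filter_upwards [hf, hη, eventually_gt_atTop 0] with r ⟨hf0, hf1⟩ hη0 hr
  have hlogf := log_neg hf0 hf1
  rw [hH, log_sq_mul_pow_mul_mul_exp hd hf0 hr hη0, abs_of_neg hlogf]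
  field_simp [hlogf.ne]
  ring

theorem eventually_le_rpow_of_tendsto_log_div_abs_log {ι : Type*} {l : Filter ι}
    {F G : ι → ℝ} {a β : ℝ} (hF : ∀ᶠ x in l, 0 < F x ∧ F x < 1) (hG : ∀ᶠ x in l, 0 < G x)
    (h : Tendsto (fun x => log (G x) / |log (F x)|) l (𝓝 a)) (hβ : β < -a) :
    ∀ᶠ x in l, G x ≤ F x ^ β := by
  filter_upwards [hF, hG, h.eventually_lt_const (lt_neg.1 hβ)] with x ⟨hF0, hF1⟩ hG0 hlt
  have hlogF := log_neg hF0 hF1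
  rw [div_lt_iff₀ (abs_pos.2 hlogF.ne), abs_of_neg hlogF] at hlt
  rw [← log_le_log_iff hG0 (by positivity), log_rpow hF0]
  linarith

theorem eventually_le_rpow_of_eq {d : ℕ} (hd : 1 ≤ d) {f g η H : ℝ → ℝ} {k b β : ℝ}
    (hH : ∀ r, H r = f r ^ 2 * r ^ (d - 1) * η r * exp (k * g r))
    (hf : ∀ᶠ r in atTop, 0 < f r ∧ f r < 1) (hη : ∀ r ≥ 0, 0 < η r)
    (hg : Tendsto (fun r => g r / |log (f r)|) atTop (𝓝 0))
    (hb : Tendsto (fun r => (((d : ℝ) - 1) * log r + log (η r)) / |log (f r)|) atTop (𝓝 b))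
    (hβ : β < 2 - b) : ∀ᶠ r in atTop, H r ≤ f r ^ β := by
  refine eventually_le_rpow_of_tendsto_log_div_abs_log hf ?_
    (tendsto_log_div_abs_log_of_eq hd hH hf ((eventually_ge_atTop 0).mono hη) hg hb)
    (by linarith)
  filter_upwards [hf, eventually_gt_atTop 0] with r ⟨hf0, _⟩ hr
  have := hη r hr.le
  rw [hH]
  positivity

theorem mul_rpow_le_of_div_le_rpow {κ κ' β u F : ℝ} (hκ : 0 < κ) (hκ' : 0 < κ') (hβ : 0 < β)
    (hu : 0 < u) (hF : 0 < F) (h : κ' / u ≤ F ^ β) :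
    (κ' / κ) ^ (1 / β) * ((κ / u) ^ (1 / 2 : ℝ)) ^ (2 / β) ≤ F := by
  calc (κ' / κ) ^ (1 / β) * ((κ / u) ^ (1 / 2 : ℝ)) ^ (2 / β) = (κ' / u) ^ (1 / β) := by
        rw [← rpow_mul (by positivity), show (1 / 2 : ℝ) * (2 / β) = 1 / β by ring,
          ← mul_rpow (by positivity) (by positivity)]
        congr 1
        field_simp
    _ ≤ (F ^ β) ^ (1 / β) := by gcongr
    _ = F := by rw [← rpow_mul hF.le, mul_one_div_cancel hβ.ne', rpow_one]

theorem eventually_const_mul_rpow_le_self {c lam : ℝ} (hlam : 1 < lam) :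
    ∀ᶠ s in 𝓝[>] (0 : ℝ), c * s ^ lam ≤ s := by
  have hcont : Tendsto (fun s : ℝ => c * s ^ (lam - 1)) (𝓝 0) (𝓝 (c * 0 ^ (lam - 1))) :=
    ((continuousAt_rpow_const 0 _ (Or.inr (by linarith))).tendsto).const_mul c
  rw [zero_rpow (by linarith), mul_zero] at hcont
  filter_upwards [(hcont.mono_left nhdsWithin_le_nhds).eventually_lt_const one_pos,
    self_mem_nhdsWithin] with s hs (hs0 : 0 < s)
  calc c * s ^ lam = c * s ^ (lam - 1) * s := by
        rw [mul_assoc, ← rpow_add_one hs0.ne']; ring_nf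
    _ ≤ s := mul_le_of_le_one_left hs0.le hs.le

section DecreasingInverse

variable {f finv : ℝ → ℝ}

theorem StrictAntiOn.le_of_le_apply_of_rightInvOn (hf : StrictAntiOn f (Ioi 0))
    (hmaps : MapsTo finv (Ioi 0) (Ioi 0)) (hinv : RightInvOn finv f (Ioi 0))
    {x y : ℝ} (hx : 0 < x) (hy : 0 < y) (h : y ≤ f x) : x ≤ finv y := by
  by_contra! hlt
  have := hf (hmaps hy) hx hlt
  rw [hinv hy] at this
  linarith

theorem StrictAntiOn.tendsto_nhdsGT_zero_of_rightInvOn (hf : StrictAntiOn f (Ioi 0))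
    (hfmaps : MapsTo f (Ioi 0) (Ioi 0)) (hmaps : MapsTo finv (Ioi 0) (Ioi 0))
    (hinv : RightInvOn finv f (Ioi 0)) : Tendsto finv (𝓝[>] 0) atTop := by
  refine tendsto_atTop.2 fun M => ?_
  have hM : (0 : ℝ) < max M 1 := by positivity
  filter_upwards [Ioo_mem_nhdsGT (hfmaps hM)] with y hy
  exact (le_max_left M 1).trans (hf.le_of_le_apply_of_rightInvOn hmaps hinv hM hy.1 hy.2.le)

theorem eventually_div_le_of_antitoneOn {g : ℝ → ℝ} {R c lam : ℝ}
    (hf : StrictAntiOn f (Ioi 0)) (hfmaps : MapsTo f (Ioi 0) (Ioi 0))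
    (hmaps : MapsTo finv (Ioi 0) (Ioi 0)) (hinv : RightInvOn finv f (Ioi 0))
    (hg : ∀ r ≥ 0, 0 < g r) (hanti : AntitoneOn (fun r => g r / |log (f r)|) (Ici R))
    (hc : 0 < c) (hlam : 1 < lam) :
    ∀ᶠ s in 𝓝[>] 0, g (finv (c * s ^ lam)) / g (finv s) ≤ lam + |log c| := by
  filter_upwards [eventually_const_mul_rpow_le_self (c := c) hlam,
    (hf.tendsto_nhdsGT_zero_of_rightInvOn hfmaps hmaps hinv).eventually_ge_atTop R,
    Ioo_mem_nhdsGT (exp_pos (-1))] with s hle hR ⟨hs0, hs⟩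
  set t := c * s ^ lam
  have ht0 : 0 < t := by positivity
  have hlog_s : 1 ≤ |log s| := by
    rw [abs_of_neg (log_neg hs0 (hs.trans (by simp)))]
    linarith [(log_lt_iff_lt_exp hs0).2 hs]
  have hlog_t : |log t| ≤ (lam + |log c|) * |log s| := by
    calc |log t| = |log c + lam * log s| := by rw [log_mul hc.ne' (by positivity), log_rpow hs0]
      _ ≤ |log c| + lam * |log s| := by
          grw [abs_add_le, abs_mul, abs_of_pos (by linarith : 0 < lam)]
      _ ≤ (lam + |log c|) * |log s| := by nlinarith [abs_nonneg (log c)]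
  have hst : finv s ≤ finv t :=
    hf.le_of_le_apply_of_rightInvOn hmaps hinv (hmaps hs0) ht0 (by rw [hinv hs0]; exact hle)
  have hmono := hanti hR (hR.trans hst) hst
  simp only [hinv hs0, hinv ht0] at hmono
  have hgs := hg _ (hmaps hs0).le
  have ht1 : 0 < |log t| := abs_pos.2 (log_neg ht0 (hle.trans_lt (hs.trans (by simp)))).ne
  rw [div_le_iff₀ hgs]
  rw [div_le_div_iff₀ ht1 (by linarith)] at hmono
  nlinarith [hg _ (hmaps ht0).le]

theorem eventually_apply_le_mul_apply_finv {g : ℝ → ℝ} {R c lam ω : ℝ} {ι : Type*}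
    {l : Filter ι} {r s : ι → ℝ} (hf : StrictAntiOn f (Ioi 0))
    (hfmaps : MapsTo f (Ioi 0) (Ioi 0)) (hmaps : MapsTo finv (Ioi 0) (Ioi 0))
    (hinv : RightInvOn finv f (Ioi 0)) (hg : ∀ r ≥ 0, 0 < g r) (hg_mono : MonotoneOn g (Ici 0))
    (hanti : AntitoneOn (fun r => g r / |log (f r)|) (Ici R))
    (hrate : limsup (fun s => g (finv (c * s ^ lam)) / g (finv s)) (𝓝[>] 0) ≤ lam ^ ω)
    (hc : 0 < c) (hlam : 1 < lam) (hs : Tendsto s l (𝓝[>] 0))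
    (hr : ∀ᶠ x in l, 0 < r x ∧ c * s x ^ lam ≤ f (r x)) :
    ∀ᶠ x in l, g (r x) ≤ (lam ^ ω + 1) * g (finv (s x)) := by
  have hratio : ∀ᶠ s in 𝓝[>] 0, g (finv (c * s ^ lam)) / g (finv s) < lam ^ ω + 1 :=
    -- `limsup` is junk for functions unbounded above, hence the bound coming from (D)
    eventually_lt_of_limsup_lt (hrate.trans_lt (lt_add_one _)) (isBoundedUnder_of_eventually_le
      (eventually_div_le_of_antitoneOn hf hfmaps hmaps hinv hg hanti hc hlam))
  filter_upwards [hs.eventually hratio, hs self_mem_nhdsWithin, hr]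
    with x hx (hs0 : 0 < s x) ⟨hr0, hrs⟩
  have hcs : 0 < c * s x ^ lam := by positivity
  calc g (r x) ≤ g (finv (c * s x ^ lam)) :=
        hg_mono (mem_Ici.2 hr0.le) (mem_Ici.2 (hmaps hcs).le)
          (hf.le_of_le_apply_of_rightInvOn hmaps hinv hr0 hcs hrs)
    _ ≤ _ := ((div_lt_iff₀ (hg _ (hmaps hs0).le)).1 hx).le

end DecreasingInverse

theorem tendsto_div_of_tendsto_div_of_le_mul {ι : Type*} {l : Filter ι} {a b c : ι → ℝ} {M : ℝ}
    (h : Tendsto (fun x => a x / b x) l (𝓝 0)) (hb : ∀ᶠ x in l, 0 < b x)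
    (hbc : ∀ᶠ x in l, b x ≤ M * c x) : Tendsto (fun x => a x / c x) l (𝓝 0) := by
  refine squeeze_zero_norm' ?_ (by simpa using (h.norm.const_mul |M|))
  filter_upwards [hb, hbc] with x hb hbc
  have hMc : b x ≤ |M| * |c x| := by rw [← abs_mul]; exact hbc.trans (le_abs_self _)
  have hc : 0 < |c x| := abs_pos.2 fun h => by simp [h] at hMc; linarith
  rw [norm_div, Real.norm_eq_abs, Real.norm_eq_abs, abs_of_pos hb, mul_div_assoc',
    div_le_div_iff₀ hc hb]
  nlinarith [abs_nonneg (a x)]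

theorem tendsto_const_div_rpow_nhdsGT_zero {κ p : ℝ} (hκ : 0 < κ) (hp : 0 < p) :
    Tendsto (fun u : ℝ => (κ / u) ^ p) atTop (𝓝[>] 0) := by
  have h := ((continuousAt_rpow_const 0 p (Or.inr hp.le)).tendsto).comp
    (tendsto_const_nhds.div_atTop tendsto_id : Tendsto (fun u : ℝ => κ / u) atTop (𝓝 0))
  rw [zero_rpow hp.ne'] at h
  refine tendsto_nhdsWithin_of_tendsto_nhds_of_eventually_within _ h ?_
  filter_upwards [eventually_gt_atTop 0] with u hu using rpow_pos_of_pos (div_pos hκ hu) p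

theorem tendsto_apply_finv_div_log {f finv g : ℝ → ℝ} {κ p : ℝ} (hκ : 0 < κ) (hp : 0 < p)
    (hfinv : Tendsto finv (𝓝[>] 0) atTop) (hinv : RightInvOn finv f (Ioi 0))
    (hD : Tendsto (fun r => g r / |log (f r)|) atTop (𝓝 0)) :
    Tendsto (fun u => g (finv ((κ / u) ^ p)) / log u) atTop (𝓝 0) := by
  have hs := tendsto_const_div_rpow_nhdsGT_zero hκ hp
  have hlim : Tendsto (fun u => g (finv ((κ / u) ^ p)) / |log ((κ / u) ^ p)|) atTop (𝓝 0) := by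
    refine ((hD.comp hfinv).comp hs).congr' ?_
    filter_upwards [hs self_mem_nhdsWithin] with u (hu : 0 < (κ / u) ^ p)
    simp [hinv hu]
  refine squeeze_zero_norm' ?_ (by simpa using hlim.norm.const_mul (2 * p))
  filter_upwards [eventually_ge_atTop (exp (|log κ| + 1))] with u hu
  have hu0 : 0 < u := (exp_pos _).trans_le hu
  have hlog_u : |log κ| + 1 ≤ log u := by rwa [le_log_iff_exp_le hu0]
  have hlog_s : |log ((κ / u) ^ p)| = p * (log u - log κ) := by
    rw [log_rpow (div_pos hκ hu0), log_div hκ.ne' hu0.ne', abs_mul, abs_of_pos hp,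
      abs_of_neg (by linarith [le_abs_self (log κ)])]
    ring
  have hκu : 0 < log u - log κ := by linarith [le_abs_self (log κ)]
  rw [hlog_s, norm_div, Real.norm_eq_abs, Real.norm_of_nonneg (by linarith [abs_nonneg (log κ)]),
    mul_div_assoc', div_le_div_iff₀ (by linarith [abs_nonneg (log κ)]) (by positivity)]
  have : 0 ≤ log u + log κ := by linarith [neg_abs_le (log κ)]
  nlinarith [mul_nonneg (mul_nonneg (abs_nonneg (g (finv ((κ / u) ^ p)))) hp.le) this]

theorem eventually_pos_and_log_le_mul {g η σ : ℝ → ℝ} (k : ℝ) (hg : ∀ r ≥ 0, 0 < g r)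
    (hη : ∀ r ≥ 0, 0 < η r) (hσ : ∀ r ≥ 1, σ r < r)
    (hησ : Tendsto (fun r => (log (η r) - log (r - σ r)) / g r) atTop (𝓝 0)) :
    ∀ᶠ r in atTop, 0 < g r ^ 2 * exp (k * g r) * η r / (r - σ r) ∧
      log (g r ^ 2 * exp (k * g r) * η r / (r - σ r)) ≤ (|k| + 3) * g r := by
  filter_upwards [hησ.eventually_lt_const one_pos, eventually_ge_atTop 1] with r hr hr1
  have hg0 := hg r (by linarith)
  have hη0 := hη r (by linarith)
  have hσr : 0 < r - σ r := sub_pos.2 (hσ r hr1)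
  refine ⟨by positivity, ?_⟩
  rw [log_div (by positivity) hσr.ne', log_mul (by positivity) hη0.ne',
    log_mul (by positivity) (exp_ne_zero _), log_exp, log_pow]
  rw [div_lt_one hg0] at hr
  have hlog_g : log (g r) ≤ g r := (log_le_sub_one_of_pos hg0).trans (by linarith)
  have hk : k * g r ≤ |k| * g r := mul_le_mul_of_nonneg_right (le_abs_self k) hg0.le
  push_cast
  linarith

theorem tendsto_div_rpow_atTop_zero {V W : ℝ → ℝ}
    (hV : ∀ᶠ u in atTop, 0 < V u ∧ log (V u) ≤ W u)
    (hW : Tendsto (fun u => W u / log u) atTop (𝓝 0)) {δ : ℝ} (hδ : 0 < δ) :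
    Tendsto (fun u => V u / u ^ δ) atTop (𝓝 0) := by
  have hbot : Tendsto (fun u => log (V u) - δ * log u) atTop atBot := by
    refine tendsto_atBot_mono' atTop ?_
      (tendsto_log_atTop.const_mul_atTop_of_neg (by linarith : -(δ / 2) < 0))
    filter_upwards [hV, hW.eventually_lt_const (half_pos hδ), eventually_gt_atTop 1]
      with u ⟨_, hVW⟩ hWu hu
    rw [div_lt_iff₀ (log_pos hu)] at hWu
    linarith
  refine (tendsto_exp_atBot.comp hbot).congr' ?_
  filter_upwards [hV, eventually_gt_atTop 0] with u ⟨hV0, _⟩ hu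
  simp [exp_sub, exp_log hV0, rpow_def_of_pos hu, mul_comm]

theorem tendsto_div_rpow_of_le_mul {g η σ γ a : ℝ → ℝ} {k M δ : ℝ} (hg : ∀ r ≥ 0, 0 < g r)
    (hη : ∀ r ≥ 0, 0 < η r) (hσ : ∀ r ≥ 1, σ r < r)
    (hησ : Tendsto (fun r => (log (η r) - log (r - σ r)) / g r) atTop (𝓝 0))
    (hγ : Tendsto γ atTop atTop) (hγa : ∀ᶠ u in atTop, g (γ u) ≤ M * a u)
    (ha : Tendsto (fun u => a u / log u) atTop (𝓝 0)) (hδ : 0 < δ) :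
    Tendsto (fun u => g (γ u) ^ 2 * exp (k * g (γ u)) * η (γ u) / (γ u - σ (γ u)) / u ^ δ)
      atTop (𝓝 0) := by
  have hW : Tendsto (fun u => (|k| + 3) * (M * a u) / log u) atTop (𝓝 0) := by
    simpa [mul_div_assoc, mul_assoc] using ha.const_mul ((|k| + 3) * M)
  refine tendsto_div_rpow_atTop_zero ?_ hW hδ
  filter_upwards [hγ.eventually (eventually_pos_and_log_le_mul k hg hη hσ hησ), hγa]
    with u ⟨hpos, hlog⟩ hle
  exact ⟨hpos, hlog.trans (mul_le_mul_of_nonneg_left hle (by positivity))⟩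

theorem stmt13_general
    (d : ℕ) (hd : 1 ≤ d)
    (f finv : ℝ → ℝ)
    (hf_anti : StrictAntiOn f (Set.Ioi 0))
    (hf_bij : Set.BijOn f (Set.Ioi 0) (Set.Ioi 0))
    (hf_inv : Set.InvOn finv f (Set.Ioi 0) (Set.Ioi 0))
    (g : ℝ → ℝ)
    (hg_pos : ∀ r ≥ 0, 0 < g r)
    (hg_mono : StrictMonoOn g (Set.Ici 0))
    -- Condition (D)
    (hD : ∃ R > 0, (∀ r ≥ R, f r < 1) ∧
      AntitoneOn (fun r => g r / |Real.log (f r)|) (Set.Ici R) ∧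
      Tendsto (fun r => g r / |Real.log (f r)|) atTop (𝓝 0))
    -- Rate condition on g with exponent ω
    (ω : ℝ)
    (hrate : ∀ c > 0, ∀ lam ≥ (1:ℝ),
      limsup (fun s => g (finv (c * s ^ lam)) / g (finv s)) (𝓝[>] (0:ℝ)) ≤ lam ^ ω)
    (K' t κ κ' : ℝ) (hκ : 0 < κ) (hκ' : 0 < κ')
    (η : ℝ → ℝ)
    (hη_pos : ∀ r ≥ 0, 0 < η r)
    (b : ℝ) (hb : b ∈ Set.Ico (0:ℝ) 2)
    (hb_lim : Tendsto
      (fun r => (((d : ℝ) - 1) * Real.log r + Real.log (η r)) / |Real.log (f r)|)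
      atTop (𝓝 b))
    (H : ℝ → ℝ)
    (hH : ∀ r, H r = f r ^ 2 * r ^ (d - 1) * η r * Real.exp (K' * t * g r))
    (u₀ : ℝ) (γ : ℝ → ℝ)
    (hγ : ∀ u ≥ u₀, H (γ u) = κ' / u)
    (hγ_lim : Tendsto γ atTop atTop)
    (α : ℝ → ℝ) (hα : ∀ u > 0, α u = finv ((κ / u) ^ ((1:ℝ) / 2)))
    (σ : ℝ → ℝ)
    (hσ_lt : ∀ r ≥ 1, σ r < r)
    (hησ : Tendsto (fun r => (Real.log (η r) - Real.log (r - σ r)) / g r) atTop (𝓝 0)) :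
    Tendsto (fun u => (Real.log (η (γ u)) - Real.log (γ u - σ (γ u))) / g (α u))
      atTop (𝓝 0) ∧
    ∀ δ > 0,
      Tendsto
        (fun u => g (γ u) ^ 2 * Real.exp (K' * t * g (γ u)) * η (γ u) / (γ u - σ (γ u)) / u ^ δ)
        atTop (𝓝 0) := by
  obtain ⟨R, -, hfR, hanti, hDlim⟩ := hD
  have hfmaps : MapsTo f (Ioi 0) (Ioi 0) := hf_bij.mapsTo
  have hmaps : MapsTo finv (Ioi 0) (Ioi 0) := (hf_bij.symm hf_inv.symm).mapsTo
  obtain ⟨hb0, hb2⟩ := hb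
  set β := (2 - b) / 2 with hβ_def
  have hβ : 0 < β := by linarith
  have hlam : 1 < 2 / β := by rw [lt_div_iff₀ hβ]; linarith
  have hf01 : ∀ᶠ r in atTop, 0 < f r ∧ f r < 1 := by
    filter_upwards [eventually_ge_atTop R, eventually_gt_atTop 0] with r hR hr
    exact ⟨hfmaps hr, hfR r hR⟩
  have hHf : ∀ᶠ r in atTop, H r ≤ f r ^ β :=
    eventually_le_rpow_of_eq hd hH hf01 hη_pos hDlim hb_lim (by linarith)
  have hγα : ∀ᶠ u in atTop, g (γ u) ≤ ((2 / β) ^ ω + 1) * g (α u) := by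
    have hc : 0 < (κ' / κ) ^ (1 / β) := by positivity
    have := eventually_apply_le_mul_apply_finv hf_anti hfmaps hmaps hf_inv.2 hg_pos
      hg_mono.monotoneOn hanti (hrate _ hc _ hlam.le) hc hlam
      (tendsto_const_div_rpow_nhdsGT_zero hκ one_half_pos) (r := γ) ?_
    · filter_upwards [this, eventually_gt_atTop 0] with u h hu
      rwa [hα u hu]
    filter_upwards [hγ_lim.eventually hHf, hγ_lim.eventually_gt_atTop 0, eventually_ge_atTop u₀,
      eventually_gt_atTop 0] with u hHu hγu hu₀ hu
    exact ⟨hγu, mul_rpow_le_of_div_le_rpow hκ hκ' hβ hu (hfmaps hγu) (hγ u hu₀ ▸ hHu)⟩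
  have hgα : Tendsto (fun u => g (α u) / log u) atTop (𝓝 0) := by
    refine (tendsto_apply_finv_div_log hκ one_half_pos
      (hf_anti.tendsto_nhdsGT_zero_of_rightInvOn hfmaps hmaps hf_inv.2) hf_inv.2 hDlim).congr' ?_
    filter_upwards [eventually_gt_atTop 0] with u hu
    rw [hα u hu]
  refine ⟨tendsto_div_of_tendsto_div_of_le_mul (hησ.comp hγ_lim)
    (hγ_lim.eventually (eventually_ge_atTop 0 |>.mono hg_pos)) hγα, fun δ hδ => ?_⟩
  simpa only [rpow_natCast] using tendsto_div_rpow_of_le_mul (k := K' * t) hg_pos hη_pos hσ_lt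
    hησ hγ_lim hγα hgα (Nat.cast_pos.2 hδ)

/-- `(log η(γ(u)) − log(γ(u) − σ(γ(u))))/g(α(u)) → 0`, and for every `δ > 0`,
`v(γ(u))/u^δ → 0`, where `v(r) = g(r)² e^{K' t g(r)} η(r)/(r − σ(r))`. -/
theorem stmt13
    (d : ℕ) (hd : 1 ≤ d)
    (f finv : ℝ → ℝ)
    (hf_pos : ∀ r > 0, 0 < f r)
    (hf_anti : StrictAntiOn f (Set.Ioi 0))
    (hf_cont : ContinuousOn f (Set.Ioi 0))
    (hf_bij : Set.BijOn f (Set.Ioi 0) (Set.Ioi 0))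
    (hf_inv : Set.InvOn finv f (Set.Ioi 0) (Set.Ioi 0))
    (g : ℝ → ℝ)
    (hg_pos : ∀ r ≥ 0, 0 < g r)
    (hg_mono : StrictMonoOn g (Set.Ici 0))
    (hg_cont : ContinuousOn g (Set.Ici 0))
    (hg_lim : Tendsto g atTop atTop)
    -- Condition (D)
    (hD : ∃ R > 0, (∀ r ≥ R, f r < 1) ∧
      AntitoneOn (fun r => g r / |Real.log (f r)|) (Set.Ici R) ∧
      Tendsto (fun r => g r / |Real.log (f r)|) atTop (𝓝 0))
    -- Rate condition on g with exponent ω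
    (ω : ℝ) (hω : 0 ≤ ω)
    (hrate : ∀ c > 0, ∀ lam ≥ (1:ℝ),
      limsup (fun s => g (finv (c * s ^ lam)) / g (finv s)) (𝓝[>] (0:ℝ)) ≤ lam ^ ω)
    (K' t κ κ' : ℝ) (hK' : 0 < K') (ht : 0 < t) (hκ : 0 < κ) (hκ' : 0 < κ')
    (η : ℝ → ℝ)
    (hη_pos : ∀ r ≥ 0, 0 < η r)
    (hη_mono : MonotoneOn η (Set.Ici 0))
    (hη_cont : ContinuousOn η (Set.Ici 0))
    (hη_int : MeasureTheory.IntegrableOn (fun r => (η r)⁻¹) (Set.Ici 1))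
    (b : ℝ) (hb : b ∈ Set.Ico (0:ℝ) 2)
    (hb_anti : ∃ R : ℝ, AntitoneOn
      (fun r => (((d : ℝ) - 1) * Real.log r + Real.log (η r)) / |Real.log (f r)|)
      (Set.Ici R))
    (hb_lim : Tendsto
      (fun r => (((d : ℝ) - 1) * Real.log r + Real.log (η r)) / |Real.log (f r)|)
      atTop (𝓝 b))
    (H : ℝ → ℝ)
    (hH : ∀ r, H r = f r ^ 2 * r ^ (d - 1) * η r * Real.exp (K' * t * g r))
    (u₀ : ℝ) (γ : ℝ → ℝ)
    (hγ : ∀ u ≥ u₀, H (γ u) = κ' / u)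
    (hγ_lim : Tendsto γ atTop atTop)
    (α : ℝ → ℝ) (hα : ∀ u > 0, α u = finv ((κ / u) ^ ((1:ℝ) / 2)))
    (σ : ℝ → ℝ)
    (hσ_pos : ∀ r ≥ 0, 0 < σ r)
    (hσ_mono : MonotoneOn σ (Set.Ici 0))
    (hσ_cont : ContinuousOn σ (Set.Ici 0))
    (hσ_lt : ∀ r ≥ 1, σ r < r)
    (hησ : Tendsto (fun r => (Real.log (η r) - Real.log (r - σ r)) / g r) atTop (𝓝 0)) :
    Tendsto (fun u => (Real.log (η (γ u)) - Real.log (γ u - σ (γ u))) / g (α u))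
      atTop (𝓝 0) ∧
    ∀ δ > 0,
      Tendsto
        (fun u => g (γ u) ^ 2 * Real.exp (K' * t * g (γ u)) * η (γ u) / (γ u - σ (γ u)) / u ^ δ)
        atTop (𝓝 0) :=
  stmt13_general d hd f finv hf_anti hf_bij hf_inv g hg_pos hg_mono hD ω hrate K' t κ κ' hκ hκ' η
    hη_pos b hb hb_lim H hH u₀ γ hγ hγ_lim α hα σ hσ_lt hησ
end

section
/- Let d ≥ 1 be an integer, a ∈ (0,1), m > 0, c_m := m^{1/(2a)}, and let f(r) := r^{−(d+2a+1)/2} e^{−c_m r} for r > 0 (a strictly decreasing continuous bijection of (0,∞) onto (0,∞), with inverse f⁻¹). Let θ > 0 and g(r) := r^θ. Then: (i) for every c > 0 and λ ≥ 1, lim_{s→0⁺} g(f⁻¹(c s^λ)) / g(f⁻¹(s)) = λ^θ; (ii) for every κ > 0, setting α(u) := f⁻¹((κ/u)^{1/2}), one has lim_{u→∞} g(α(u)) / ((log u)/(2 c_m))^θ = 1. -/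
/-!
Taking logarithms in `f r = s`, the inverse `r = f⁻¹ s` satisfies `-log s = c_m r + p log r`
with `p = (d + 2a + 1)/2`; since `f⁻¹ s → ∞` as `s → 0⁺` and `log r = o(r)`, this gives
`f⁻¹ s ~ -log s / c_m`. Consequently `f⁻¹ (c s^λ) ~ λ f⁻¹ s` because `-log (c s^λ) ~ -λ log s`,
and `α u ~ log u / (2 c_m)` because `-log ((κ/u)^{1/2}) ~ (log u)/2`. Limits of ratios of
positive quantities survive raising to the power `θ`.
-/

open Filter Topology Set Asymptotics Real

lemma isEquivalent_mul_add_mul_log {c : ℝ} (hc : c ≠ 0) (p : ℝ) :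
    (fun r => c * r + p * log r) ~[atTop] fun r => c * r :=
  IsEquivalent.refl.add_isLittleO ((isLittleO_log_id_atTop.const_mul_left p).const_mul_right hc)

lemma neg_log_rpow_neg_mul_exp {r : ℝ} (hr : 0 < r) (p c : ℝ) :
    -log (r ^ (-p) * exp (-(c * r))) = c * r + p * log r := by
  rw [log_mul (rpow_pos_of_pos hr _).ne' (exp_ne_zero _), log_rpow hr, log_exp]
  ring

lemma Set.RightInvOn.tendsto_nhdsGT_zero_atTop {f φ : ℝ → ℝ} (hφ : RightInvOn φ f (Ioi 0))
    (hφ_pos : MapsTo φ (Ioi 0) (Ioi 0)) (hf_anti : AntitoneOn f (Ioi 0))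
    (hf_pos : MapsTo f (Ioi 0) (Ioi 0)) :
    Tendsto φ (𝓝[>] 0) atTop := by
  refine tendsto_atTop.2 fun b => ?_
  have hM : (0 : ℝ) < max b 1 := lt_max_of_lt_right one_pos
  filter_upwards [Ioo_mem_nhdsGT (hf_pos hM)] with s ⟨hs, hsM⟩
  refine (le_max_left b 1).trans (le_of_not_gt fun hlt => hsM.not_ge ?_)
  simpa only [hφ.eq hs] using hf_anti (hφ_pos hs) hM hlt.le

lemma isEquivalent_neg_log_div_of_rightInvOn {f φ : ℝ → ℝ} {c p : ℝ} (hc : c ≠ 0)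
    (hf : ∀ r > 0, f r = r ^ (-p) * exp (-(c * r))) (hf_anti : AntitoneOn f (Ioi 0))
    (hφ : RightInvOn φ f (Ioi 0)) (hφ_pos : MapsTo φ (Ioi 0) (Ioi 0)) :
    φ ~[𝓝[>] 0] fun s => -log s / c := by
  have hf_pos : MapsTo f (Ioi 0) (Ioi 0) := fun r (hr : 0 < r) => by
    rw [mem_Ioi, hf r hr]; positivity
  have hlog : (fun s => c * φ s + p * log (φ s)) =ᶠ[𝓝[>] 0] fun s => -log s := by
    filter_upwards [self_mem_nhdsWithin] with s hs
    have h := neg_log_rpow_neg_mul_exp (hφ_pos hs) p c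
    rwa [← hf _ (hφ_pos hs), hφ.eq hs, eq_comm] at h
  have hequiv : (fun s => -log s) ~[𝓝[>] 0] fun s => c * φ s :=
    ((isEquivalent_mul_add_mul_log hc p).comp_tendsto
      (hφ.tendsto_nhdsGT_zero_atTop hφ_pos hf_anti hf_pos)).congr_left hlog
  have hcancel : φ =ᶠ[𝓝[>] 0] (fun s => c * φ s) / fun _ => c :=
    Eventually.of_forall fun s => (mul_div_cancel_left₀ (φ s) hc).symm
  exact hcancel.trans_isEquivalent (hequiv.div IsEquivalent.refl).symm

lemma tendsto_norm_const_mul_atTop {α : Type*} {l : Filter α} {w : α → ℝ} {t : ℝ} (ht : t ≠ 0)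
    (hw : Tendsto (fun x => ‖w x‖) l atTop) :
    Tendsto (norm ∘ fun x => t * w x) l atTop := by
  simpa only [Function.comp_def, norm_mul] using hw.const_mul_atTop (norm_pos_iff.2 ht)

lemma isEquivalent_neg_log_const_mul_rpow {k lam : ℝ} (hk : 0 < k) (hlam : lam ≠ 0) :
    (fun s => -log (k * s ^ lam)) ~[𝓝[>] 0] fun s => lam * -log s := by
  have hsplit : (fun s => -log k + lam * -log s) =ᶠ[𝓝[>] 0] fun s => -log (k * s ^ lam) := by
    filter_upwards [self_mem_nhdsWithin] with s (hs : 0 < s)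
    rw [log_mul hk.ne' (rpow_pos_of_pos hs lam).ne', log_rpow hs]
    ring
  exact (IsEquivalent.refl.const_add_of_norm_tendsto_atTop (tendsto_norm_const_mul_atTop hlam
    (tendsto_norm_atTop_atTop.comp (tendsto_neg_atBot_atTop.comp tendsto_log_nhdsGT_zero)))
    ).congr_left hsplit

lemma isEquivalent_neg_log_div_rpow {κ t : ℝ} (hκ : 0 < κ) (ht : t ≠ 0) :
    (fun u => -log ((κ / u) ^ t)) ~[atTop] fun u => t * log u := by
  have hsplit : (fun u => -(t * log κ) + t * log u) =ᶠ[atTop] fun u => -log ((κ / u) ^ t) := by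
    filter_upwards [eventually_gt_atTop 0] with u hu
    rw [log_rpow (div_pos hκ hu), log_div hκ.ne' hu.ne']
    ring
  exact (IsEquivalent.refl.const_add_of_norm_tendsto_atTop (tendsto_norm_const_mul_atTop ht
    (tendsto_norm_atTop_atTop.comp tendsto_log_atTop))).congr_left hsplit

lemma tendsto_const_mul_rpow_nhdsGT_zero {k lam : ℝ} (hk : 0 < k) (hlam : 0 < lam) :
    Tendsto (fun s => k * s ^ lam) (𝓝[>] 0) (𝓝[>] 0) := by
  refine tendsto_nhdsWithin_iff.2 ⟨?_, ?_⟩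
  · have h := ((continuousAt_rpow_const 0 lam (Or.inr hlam.le)).tendsto.const_mul k).mono_left
      (nhdsWithin_le_nhds (s := Ioi 0))
    rwa [zero_rpow hlam.ne', mul_zero] at h
  · filter_upwards [self_mem_nhdsWithin] with s (hs : 0 < s)
    exact mul_pos hk (rpow_pos_of_pos hs lam)

lemma tendsto_div_rpow_atTop_nhdsGT_zero {κ t : ℝ} (hκ : 0 < κ) (ht : 0 < t) :
    Tendsto (fun u => (κ / u) ^ t) atTop (𝓝[>] 0) := by
  refine tendsto_nhdsWithin_iff.2 ⟨?_, ?_⟩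
  · have h := (continuousAt_rpow_const 0 t (Or.inr ht.le)).tendsto.comp
      (tendsto_const_nhds.div_atTop tendsto_id : Tendsto (fun u : ℝ => κ / u) atTop (𝓝 0))
    rwa [zero_rpow ht.ne'] at h
  · filter_upwards [eventually_gt_atTop 0] with u hu
    exact rpow_pos_of_pos (div_pos hκ hu) t

section InverseAsymptotics

variable {φ : ℝ → ℝ} {c : ℝ}

lemma isEquivalent_comp_const_mul_rpow (hE : φ ~[𝓝[>] 0] fun s => -log s / c) {k lam : ℝ}
    (hk : 0 < k) (hlam : 0 < lam) :
    (fun s => φ (k * s ^ lam)) ~[𝓝[>] 0] fun s => lam * φ s :=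
  calc (fun s => φ (k * s ^ lam))
      _ ~[𝓝[>] 0] fun s => -log (k * s ^ lam) / c :=
        hE.comp_tendsto (tendsto_const_mul_rpow_nhdsGT_zero hk hlam)
      _ ~[𝓝[>] 0] fun s => lam * -log s / c :=
        (isEquivalent_neg_log_const_mul_rpow hk hlam.ne').div IsEquivalent.refl
      _ = fun s => lam * (-log s / c) := by simp only [mul_div_assoc]
      _ ~[𝓝[>] 0] fun s => lam * φ s := IsEquivalent.refl.mul hE.symm

lemma isEquivalent_comp_div_rpow (hE : φ ~[𝓝[>] 0] fun s => -log s / c) {κ t : ℝ}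
    (hκ : 0 < κ) (ht : 0 < t) :
    (fun u => φ ((κ / u) ^ t)) ~[atTop] fun u => t * log u / c :=
  calc (fun u => φ ((κ / u) ^ t))
      _ ~[atTop] fun u => -log ((κ / u) ^ t) / c :=
        hE.comp_tendsto (tendsto_div_rpow_atTop_nhdsGT_zero hκ ht)
      _ ~[atTop] fun u => t * log u / c :=
        (isEquivalent_neg_log_div_rpow hκ ht.ne').div IsEquivalent.refl

end InverseAsymptotics

lemma tendsto_rpow_div_rpow_of_isEquivalent_const_mul {α : Type*} {l : Filter α} {u v : α → ℝ}
    {L : ℝ} (θ : ℝ) (hL : L ≠ 0) (hu : ∀ᶠ x in l, 0 < u x) (hv : ∀ᶠ x in l, 0 < v x)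
    (h : u ~[l] fun x => L * v x) :
    Tendsto (fun x => u x ^ θ / v x ^ θ) l (𝓝 (L ^ θ)) := by
  have hratio : Tendsto (u / v) l (𝓝 L) := by
    refine (h.div (IsEquivalent.refl (u := v))).symm.tendsto_nhds (tendsto_const_nhds.congr' ?_)
    filter_upwards [hv] with x hx
    exact (mul_div_cancel_right₀ L hx.ne').symm
  refine (hratio.rpow_const (Or.inl hL)).congr' ?_
  filter_upwards [hu, hv] with x hux hvx
  exact div_rpow hux.le hvx.le θ

theorem stmt17_general
    (d : ℕ) (a m : ℝ) (hm : 0 < m)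
    (cm : ℝ) (hcm : cm = m ^ (1 / (2 * a)))
    (f finv g : ℝ → ℝ)
    (hf : ∀ r > 0, f r = r ^ (-(((d : ℝ) + 2 * a + 1) / 2)) * Real.exp (-(cm * r)))
    (hf_anti : StrictAntiOn f (Set.Ioi 0))
    (hf_bij : Set.BijOn f (Set.Ioi 0) (Set.Ioi 0))
    (hf_inv : Set.InvOn finv f (Set.Ioi 0) (Set.Ioi 0))
    (θ : ℝ)
    (hg : ∀ r > 0, g r = r ^ θ) :
    (∀ c > 0, ∀ lam ≥ (1:ℝ),
      Tendsto (fun s => g (finv (c * s ^ lam)) / g (finv s)) (𝓝[>] (0:ℝ))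
        (𝓝 (lam ^ θ))) ∧
    (∀ κ > 0,
      Tendsto (fun u => g (finv ((κ / u) ^ ((1:ℝ) / 2))) / (Real.log u / (2 * cm)) ^ θ)
        atTop (𝓝 1)) := by
  have hcm_pos : 0 < cm := hcm ▸ rpow_pos_of_pos hm _
  have hfinv_pos : MapsTo finv (Ioi 0) (Ioi 0) := hf_inv.1.mapsTo hf_bij.surjOn
  have hE : finv ~[𝓝[>] 0] fun s => -log s / cm :=
    isEquivalent_neg_log_div_of_rightInvOn hcm_pos.ne' hf hf_anti.antitoneOn hf_inv.2 hfinv_pos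
  have hfinv_ev : ∀ᶠ s in 𝓝[>] (0 : ℝ), 0 < finv s :=
    eventually_mem_nhdsWithin.mono fun s hs => hfinv_pos hs
  refine ⟨fun c hc lam hlam => ?_, fun κ hκ => ?_⟩
  · have hlam_pos : 0 < lam := one_pos.trans_le hlam
    have hcomp_pos : ∀ᶠ s in 𝓝[>] 0, 0 < finv (c * s ^ lam) :=
      (tendsto_const_mul_rpow_nhdsGT_zero hc hlam_pos).eventually hfinv_ev
    refine (tendsto_rpow_div_rpow_of_isEquivalent_const_mul θ hlam_pos.ne' hcomp_pos hfinv_ev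
      (isEquivalent_comp_const_mul_rpow hE hc hlam_pos)).congr' ?_
    filter_upwards [hfinv_ev, hcomp_pos] with s hs hcs
    rw [hg _ hs, hg _ hcs]
  · have hcomp_pos : ∀ᶠ u in atTop, 0 < finv ((κ / u) ^ ((1:ℝ) / 2)) :=
      (tendsto_div_rpow_atTop_nhdsGT_zero hκ one_half_pos).eventually hfinv_ev
    have hlog_pos : ∀ᶠ u in atTop, 0 < log u / (2 * cm) :=
      (tendsto_log_atTop.eventually_gt_atTop 0).mono fun u hu => by positivity
    have hequiv : (fun u => finv ((κ / u) ^ ((1:ℝ) / 2))) ~[atTop]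
        fun u => 1 * (log u / (2 * cm)) :=
      (isEquivalent_comp_div_rpow hE hκ one_half_pos).congr_right
        (Eventually.of_forall fun u => by ring)
    have h := tendsto_rpow_div_rpow_of_isEquivalent_const_mul θ one_ne_zero hcomp_pos hlog_pos
      hequiv
    rw [one_rpow] at h
    refine h.congr' ?_
    filter_upwards [hcomp_pos] with u hu
    rw [hg _ hu]

/-- Relativistic profile `f(r) = r^{−(d+2a+1)/2} e^{−c_m r}` with power-type
potential profile `g(r) = r^θ`:
(i) for every `c > 0` and `λ ≥ 1`, `g(f⁻¹(c s^λ))/g(f⁻¹(s)) → λ^θ` as `s → 0⁺`;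
(ii) for every `κ > 0`, with `α(u) = f⁻¹((κ/u)^{1/2})`,
`g(α(u)) / ((log u)/(2 c_m))^θ → 1` as `u → ∞`. -/
theorem stmt17
    (d : ℕ) (hd : 1 ≤ d) (a m : ℝ) (ha : a ∈ Set.Ioo (0:ℝ) 1) (hm : 0 < m)
    (cm : ℝ) (hcm : cm = m ^ (1 / (2 * a)))
    (f finv g : ℝ → ℝ)
    (hf : ∀ r > 0, f r = r ^ (-(((d : ℝ) + 2 * a + 1) / 2)) * Real.exp (-(cm * r)))
    (hf_anti : StrictAntiOn f (Set.Ioi 0))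
    (hf_cont : ContinuousOn f (Set.Ioi 0))
    (hf_bij : Set.BijOn f (Set.Ioi 0) (Set.Ioi 0))
    (hf_inv : Set.InvOn finv f (Set.Ioi 0) (Set.Ioi 0))
    (θ : ℝ) (hθ : 0 < θ)
    (hg : ∀ r > 0, g r = r ^ θ) :
    (∀ c > 0, ∀ lam ≥ (1:ℝ),
      Tendsto (fun s => g (finv (c * s ^ lam)) / g (finv s)) (𝓝[>] (0:ℝ))
        (𝓝 (lam ^ θ))) ∧
    (∀ κ > 0,
      Tendsto (fun u => g (finv ((κ / u) ^ ((1:ℝ) / 2))) / (Real.log u / (2 * cm)) ^ θ)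
        atTop (𝓝 1)) :=
  stmt17_general d a m hm cm hcm f finv g hf hf_anti hf_bij hf_inv θ hg
end
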